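/- arXiv:1909.06198 — 6 statements merged into one kernel-verified Lean document; each statement's English description precedes it below -/
import Mathlib

section
/- Let F be a field, A an m×m matrix over F and B a k×k matrix over F. Then the minimal polynomials of A and B are coprime in F[x] if and only if every (m+k)×(m+k) matrix over F that commutes with the block-diagonal matrix diag(A,B) is of the form diag(X,Y) where X is an m×m matrix commuting with A and Y is a k×k matrix commuting with B. -/
/-!
If `p(A) = 0`, `q(B) = 0` and `u p + v q = 1`, then `AP = PB` gives
`P = (vq)(A) P = P (vq)(B) = 0`, so the off-diagonal blocks of anything commuting with
`diag(A, B)` vanish. Conversely, a common root `α` of the two minimal polynomials in an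
algebraic closure `K` is an eigenvalue of `A` and of `Bᵀ`; with `Av = αv` and `wᵀB = αwᵀ`,
the rank-one matrix `v wᵀ` is a nonzero solution of `AP = PB` over `K`, and applying a
suitable `F`-linear functional `K → F` entrywise turns it into a nonzero solution over `F`.
The matrix `diag(A, B)` then commutes with the block matrix having that solution in its
upper-right corner.
-/

open Matrix Polynomial

namespace Matrix

variable {n₁ n₂ : Type*}

section CommRing

variable [Fintype n₁] [Fintype n₂] [DecidableEq n₁] [DecidableEq n₂]
  {R : Type*} [CommRing R]
  {A : Matrix n₁ n₁ R} {B : Matrix n₂ n₂ R} {P : Matrix n₁ n₂ R}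

theorem pow_mul_eq_mul_pow_of_mul_eq_mul (h : A * P = P * B) (j : ℕ) :
    A ^ j * P = P * B ^ j := by
  induction j with
  | zero => simp
  | succ j ih =>
    rw [pow_succ, pow_succ, Matrix.mul_assoc, h, ← Matrix.mul_assoc, ih, Matrix.mul_assoc]

theorem aeval_mul_eq_mul_aeval_of_mul_eq_mul (h : A * P = P * B) (p : R[X]) :
    aeval A p * P = P * aeval B p := by
  induction p using Polynomial.induction_on' with
  | add p q hp hq => rw [map_add, map_add, Matrix.add_mul, Matrix.mul_add, hp, hq]
  | monomial j a =>
    simp only [aeval_monomial, Algebra.algebraMap_eq_smul_one, Matrix.smul_mul, Matrix.mul_smul,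
      Matrix.one_mul, pow_mul_eq_mul_pow_of_mul_eq_mul h]

theorem eq_zero_of_mul_eq_mul_of_isCoprime {p q : R[X]} (hpq : IsCoprime p q)
    (hp : aeval A p = 0) (hq : aeval B q = 0) (h : A * P = P * B) : P = 0 := by
  obtain ⟨u, v, huv⟩ := hpq
  have hvq : aeval A (v * q) = 1 := by simpa [hp] using congrArg (aeval A) huv
  calc P = aeval A (v * q) * P := by rw [hvq, Matrix.one_mul]
    _ = P * aeval B (v * q) := aeval_mul_eq_mul_aeval_of_mul_eq_mul h _
    _ = 0 := by simp [hq]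

end CommRing

section Descent

variable {F K : Type*} [Field F] [Ring K] [Algebra F K]

theorem map_algebraMap_mul_map_linearMap [Fintype n₁] (A : Matrix n₁ n₁ F)
    (P : Matrix n₁ n₂ K) (f : K →ₗ[F] F) :
    (A.map (algebraMap F K) * P).map f = A * P.map f := by
  ext i j
  simp only [map_apply, mul_apply, map_sum, ← Algebra.smul_def, map_smul, smul_eq_mul]

theorem mul_map_algebraMap_map_linearMap [Fintype n₂] (P : Matrix n₁ n₂ K)
    (B : Matrix n₂ n₂ F) (f : K →ₗ[F] F) :
    (P * B.map (algebraMap F K)).map f = P.map f * B := by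
  ext i j
  simp only [map_apply, mul_apply, map_sum, ← Algebra.commutes, ← Algebra.smul_def, map_smul,
    smul_eq_mul, mul_comm]

theorem exists_ne_zero_mul_eq_mul_of_map [Fintype n₁] [Fintype n₂]
    {A : Matrix n₁ n₁ F} {B : Matrix n₂ n₂ F} {P : Matrix n₁ n₂ K} (hP : P ≠ 0)
    (h : A.map (algebraMap F K) * P = P * B.map (algebraMap F K)) :
    ∃ P₀ : Matrix n₁ n₂ F, P₀ ≠ 0 ∧ A * P₀ = P₀ * B := by
  obtain ⟨i, j, hij⟩ : ∃ i j, P i j ≠ 0 := by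
    by_contra! h0
    exact hP (Matrix.ext h0)
  obtain ⟨f, hf⟩ : ∃ f : Module.Dual F K, f (P i j) ≠ 0 := by
    by_contra! h0
    exact hij ((Module.forall_dual_apply_eq_zero_iff F _).mp h0)
  refine ⟨P.map f, fun h0 => hf congr($h0 i j), ?_⟩
  rw [← map_algebraMap_mul_map_linearMap, h, mul_map_algebraMap_map_linearMap]

end Descent

theorem det_scalar_sub_map_eq_zero_of_aeval_minpoly {n : Type*} [Fintype n] [DecidableEq n]
    {F K : Type*} [Field F] [CommRing K] [Algebra F K] {A : Matrix n n F} {α : K}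
    (h : aeval α (minpoly F A) = 0) : (scalar n α - A.map (algebraMap F K)).det = 0 := by
  rw [← eval_charpoly, charpoly_map, eval_map_algebraMap]
  exact aeval_eq_zero_of_dvd_aeval_eq_zero (minpoly_dvd_charpoly A) h

theorem fromBlocks_mul_fromBlocks_zero_zero_comm_iff [Fintype n₁] [Fintype n₂]
    {R : Type*} [Ring R] {A X : Matrix n₁ n₁ R} {B Y : Matrix n₂ n₂ R}
    {P : Matrix n₁ n₂ R} {Q : Matrix n₂ n₁ R} :
    fromBlocks X P Q Y * fromBlocks A 0 0 B = fromBlocks A 0 0 B * fromBlocks X P Q Y ↔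
      X * A = A * X ∧ P * B = A * P ∧ Q * A = B * Q ∧ Y * B = B * Y := by
  simp [fromBlocks_multiply, fromBlocks_inj]

variable [Fintype n₁] [Fintype n₂] [DecidableEq n₁] [DecidableEq n₂]

theorem exists_ne_zero_mul_eq_mul_of_det_scalar_sub_eq_zero {K : Type*} [Field K]
    {A : Matrix n₁ n₁ K} {B : Matrix n₂ n₂ K} {α : K} (hA : (scalar n₁ α - A).det = 0)
    (hB : (scalar n₂ α - B).det = 0) :
    ∃ P : Matrix n₁ n₂ K, P ≠ 0 ∧ A * P = P * B := by
  obtain ⟨v, hv, hAv⟩ := exists_mulVec_eq_zero_iff.mpr hA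
  obtain ⟨w, hw, hwB⟩ := exists_vecMul_eq_zero_iff.mpr hB
  rw [sub_mulVec, sub_eq_zero] at hAv
  rw [vecMul_sub, sub_eq_zero] at hwB
  obtain ⟨i, hi⟩ := Function.ne_iff.mp hv
  obtain ⟨j, hj⟩ := Function.ne_iff.mp hw
  refine ⟨vecMulVec v w, fun h0 => mul_ne_zero hi hj congr($h0 i j), ?_⟩
  rw [mul_vecMulVec, vecMulVec_mul, ← hAv, ← hwB]
  simp

theorem isCoprime_minpoly_iff_forall_mul_eq_mul_imp_eq_zero {F : Type*} [Field F]
    (A : Matrix n₁ n₁ F) (B : Matrix n₂ n₂ F) :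
    IsCoprime (minpoly F A) (minpoly F B) ↔
      ∀ P : Matrix n₁ n₂ F, A * P = P * B → P = 0 := by
  refine ⟨fun hAB P hP =>
    eq_zero_of_mul_eq_mul_of_isCoprime hAB (minpoly.aeval F A) (minpoly.aeval F B) hP,
    fun h => ?_⟩
  by_contra hAB
  obtain ⟨α, hαA, hαB⟩ : ∃ α : AlgebraicClosure F,
      aeval α (minpoly F A) = 0 ∧ aeval α (minpoly F B) = 0 := by
    simpa [isCoprime_iff_aeval_ne_zero_of_isAlgClosed F (AlgebraicClosure F)] using hAB
  obtain ⟨P', hP', hAPB'⟩ := exists_ne_zero_mul_eq_mul_of_det_scalar_sub_eq_zero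
    (det_scalar_sub_map_eq_zero_of_aeval_minpoly hαA)
    (det_scalar_sub_map_eq_zero_of_aeval_minpoly hαB)
  obtain ⟨P, hP, hAPB⟩ := exists_ne_zero_mul_eq_mul_of_map hP' hAPB'
  exact hP (h P hAPB)

end Matrix

/-- The minimal polynomials of `A` and `B` are coprime iff every matrix
commuting with `diag(A,B)` is block diagonal `diag(X,Y)` with `X` commuting with `A`
and `Y` commuting with `B`. -/
theorem minpoly_isCoprime_iff_centralizer_blockDiag
    {F : Type*} [Field F] {m k : ℕ}
    (A : Matrix (Fin m) (Fin m) F) (B : Matrix (Fin k) (Fin k) F) :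
    IsCoprime (minpoly F A) (minpoly F B) ↔
      ∀ Z : Matrix (Fin m ⊕ Fin k) (Fin m ⊕ Fin k) F,
        Z * Matrix.fromBlocks A 0 0 B = Matrix.fromBlocks A 0 0 B * Z →
          ∃ (X : Matrix (Fin m) (Fin m) F) (Y : Matrix (Fin k) (Fin k) F),
            X * A = A * X ∧ Y * B = B * Y ∧ Z = Matrix.fromBlocks X 0 0 Y := by
  constructor
  · intro hAB Z hZ
    rw [← fromBlocks_toBlocks Z, fromBlocks_mul_fromBlocks_zero_zero_comm_iff] at hZ
    obtain ⟨hX, hP, hQ, hY⟩ := hZ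
    have hP0 := (isCoprime_minpoly_iff_forall_mul_eq_mul_imp_eq_zero A B).mp hAB _ hP.symm
    have hQ0 := (isCoprime_minpoly_iff_forall_mul_eq_mul_imp_eq_zero B A).mp hAB.symm _ hQ.symm
    refine ⟨Z.toBlocks₁₁, Z.toBlocks₂₂, hX, hY, ?_⟩
    conv_lhs => rw [← fromBlocks_toBlocks Z, hP0, hQ0]
  · intro h
    refine (isCoprime_minpoly_iff_forall_mul_eq_mul_imp_eq_zero A B).mpr fun P hP => ?_
    obtain ⟨X, Y, -, -, hZ⟩ := h (fromBlocks 0 P 0 0)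
      (fromBlocks_mul_fromBlocks_zero_zero_comm_iff.mpr (by simp [hP]))
    exact (fromBlocks_inj.mp hZ).2.1
end

section
/- Let F be a field, p a monic polynomial of degree n over F, C its companion matrix, and E ∈ M_n(F) the matrix whose (1,n) entry is 1 and all other entries are 0. Let X and Y be n×n matrices commuting with C and let T ∈ M_n(F) be arbitrary. Then EX + CT = TC + YE holds if and only if X = Y and T - X̃ commutes with C, where X̃ is the strictly upper triangular matrix whose (i,j) entry equals x_{n,j-i} (the (j-i)-th entry of the last row of X) for i < j and 0 otherwise. -/
open Matrix Polynomial

/-- The companion matrix of a monic polynomial `p` of degree `n`: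
ones on the first subdiagonal, `-(coefficients of p)` in the last column. -/
def companionMat (F : Type*) [Field F] (n : ℕ) (p : Polynomial F) :
    Matrix (Fin n) (Fin n) F :=
  Matrix.of fun i j =>
    if (j : ℕ) = n - 1 then -p.coeff (i : ℕ)
    else if (i : ℕ) = (j : ℕ) + 1 then 1 else 0

/-- The matrix `E` whose `(1,n)` entry is `1` and all other entries are `0`. -/
def Emat (F : Type*) [Field F] (n : ℕ) : Matrix (Fin n) (Fin n) F :=
  Matrix.of fun i j => if (i : ℕ) = 0 ∧ (j : ℕ) = n - 1 then 1 else 0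

/-- For `X ∈ M_n(F)`, the strictly upper triangular matrix `X̃` whose `(i,j)` entry
(1-indexed) is `x_{n, j-i}` for `i < j` and `0` otherwise. -/
def tildeMat {F : Type*} [Field F] {n : ℕ} (X : Matrix (Fin n) (Fin n) F) :
    Matrix (Fin n) (Fin n) F :=
  Matrix.of fun i j =>
    if h : (i : ℕ) < (j : ℕ) then
      X ⟨n - 1, by have := j.isLt; omega⟩
        ⟨(j : ℕ) - (i : ℕ) - 1, by have := j.isLt; omega⟩
    else 0

section Aux
variable {F : Type*} [Field F] {n : ℕ}

/-- generic "companion-shaped" matrix -/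
def cmg (a : Fin n → F) : Matrix (Fin n) (Fin n) F :=
  Matrix.of fun i j => if (j : ℕ) = n - 1 then a i else if (i : ℕ) = (j : ℕ) + 1 then 1 else 0

lemma companion_eq_cmg (p : Polynomial F) :
    companionMat F n p = cmg (fun i => -p.coeff (i : ℕ)) := rfl

lemma cmg_apply (a : Fin n → F) (i j : Fin n) :
    cmg a i j = if (j : ℕ) = n - 1 then a i else if (i : ℕ) = (j : ℕ) + 1 then 1 else 0 := rfl

lemma Emat_apply (i j : Fin n) :
    Emat F n i j = if (i : ℕ) = 0 ∧ (j : ℕ) = n - 1 then 1 else 0 := rfl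

lemma tildeMat_apply (X : Matrix (Fin n) (Fin n) F) (i j : Fin n) :
    tildeMat X i j = if h : (i : ℕ) < (j : ℕ) then
      X ⟨n - 1, by have := j.isLt; omega⟩
        ⟨(j : ℕ) - (i : ℕ) - 1, by have := j.isLt; omega⟩ else 0 := rfl

lemma cmg_mul_apply (hn : 0 < n) (a : Fin n → F) (M : Matrix (Fin n) (Fin n) F) (i j : Fin n) :
    (cmg a * M) i j = a i * M ⟨n - 1, by omega⟩ j +
      (if h : 0 < (i : ℕ) then M ⟨(i : ℕ) - 1, by omega⟩ j else 0) := by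
  have hi := i.isLt
  rw [Matrix.mul_apply]
  have e1 : cmg a i (⟨n - 1, by omega⟩ : Fin n) = a i := by simp [cmg_apply]
  by_cases h0 : 0 < (i : ℕ)
  · rw [dif_pos h0]
    rw [Fintype.sum_eq_add (⟨n - 1, by omega⟩ : Fin n) (⟨(i : ℕ) - 1, by omega⟩ : Fin n)
      (by simp [Fin.ext_iff]; omega)
      (fun c hc => by
        have k1 : (c : ℕ) ≠ n - 1 := fun h => hc.1 (Fin.ext h)
        have k2 : (c : ℕ) ≠ (i : ℕ) - 1 := fun h => hc.2 (Fin.ext h)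
        have : cmg a i c = 0 := by
          simp only [cmg_apply]
          rw [if_neg k1, if_neg (by omega)]
        rw [this, zero_mul])]
    have e2 : cmg a i (⟨(i : ℕ) - 1, by omega⟩ : Fin n) = 1 := by
      simp only [cmg_apply]
      rw [if_neg (show ¬((i : ℕ) - 1 = n - 1) by omega),
        if_pos (show (i : ℕ) = ((i : ℕ) - 1) + 1 by omega)]
    rw [e1, e2, one_mul]
  · rw [dif_neg h0, add_zero]
    rw [Fintype.sum_eq_single (⟨n - 1, by omega⟩ : Fin n)
      (fun c hc => by
        have k1 : (c : ℕ) ≠ n - 1 := fun h => hc (Fin.ext h)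
        have : cmg a i c = 0 := by
          simp only [cmg_apply]
          rw [if_neg k1, if_neg (by omega)]
        rw [this, zero_mul])]
    rw [e1]

lemma mul_cmg_apply (hn : 0 < n) (a : Fin n → F) (M : Matrix (Fin n) (Fin n) F) (i j : Fin n) :
    (M * cmg a) i j = if h : (j : ℕ) < n - 1 then M i ⟨(j : ℕ) + 1, by omega⟩
      else ∑ l, M i l * a l := by
  rw [Matrix.mul_apply]
  by_cases hj : (j : ℕ) < n - 1
  · rw [dif_pos hj]
    rw [Finset.sum_eq_single (⟨(j : ℕ) + 1, by omega⟩ : Fin n)]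
    · simp [cmg_apply]; intro h; omega
    · intro l _ hl
      have : (l : ℕ) ≠ (j : ℕ) + 1 := fun h => hl (Fin.ext h)
      simp [cmg_apply, this]
      intro h; omega
    · simp
  · rw [dif_neg hj]
    refine Finset.sum_congr rfl fun l _ => ?_
    have : (j : ℕ) = n - 1 := by have := j.isLt; omega
    simp [cmg_apply, this]

lemma Emat_mul_apply (hn : 0 < n) (M : Matrix (Fin n) (Fin n) F) (i j : Fin n) :
    (Emat F n * M) i j = if (i : ℕ) = 0 then M ⟨n - 1, by omega⟩ j else 0 := by
  rw [Matrix.mul_apply]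
  by_cases h0 : (i : ℕ) = 0
  · rw [if_pos h0]
    rw [Fintype.sum_eq_single (⟨n - 1, by omega⟩ : Fin n)
      (fun c hc => by
        have k1 : (c : ℕ) ≠ n - 1 := fun h => hc (Fin.ext h)
        have : Emat F n i c = 0 := by
          simp only [Emat_apply]
          rw [if_neg (by tauto)]
        rw [this, zero_mul])]
    have : Emat F n i (⟨n - 1, by omega⟩ : Fin n) = 1 := by
      simp [Emat_apply, h0]
    rw [this, one_mul]
  · rw [if_neg h0]
    apply Finset.sum_eq_zero
    intro c _
    have : Emat F n i c = 0 := by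
      simp only [Emat_apply]
      rw [if_neg (by tauto)]
    rw [this, zero_mul]

lemma mul_Emat_apply (hn : 0 < n) (M : Matrix (Fin n) (Fin n) F) (i j : Fin n) :
    (M * Emat F n) i j = if (j : ℕ) = n - 1 then M i ⟨0, hn⟩ else 0 := by
  rw [Matrix.mul_apply]
  by_cases h0 : (j : ℕ) = n - 1
  · rw [if_pos h0]
    rw [Fintype.sum_eq_single (⟨0, hn⟩ : Fin n)
      (fun c hc => by
        have k1 : (c : ℕ) ≠ 0 := fun h => hc (Fin.ext h)
        have : Emat F n c j = 0 := by
          simp only [Emat_apply]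
          rw [if_neg (by tauto)]
        rw [this, mul_zero])]
    have : Emat F n (⟨0, hn⟩ : Fin n) j = 1 := by
      simp [Emat_apply, h0]
    rw [this, mul_one]
  · rw [if_neg h0]
    apply Finset.sum_eq_zero
    intro c _
    have : Emat F n c j = 0 := by
      simp only [Emat_apply]
      rw [if_neg (by tauto)]
    rw [this, mul_zero]

lemma trace_mul_Emat (hn : 0 < n) (M : Matrix (Fin n) (Fin n) F) :
    Matrix.trace (M * Emat F n) = M ⟨n - 1, by omega⟩ ⟨0, hn⟩ := by
  rw [Matrix.trace]
  rw [Fintype.sum_eq_single (⟨n - 1, by omega⟩ : Fin n)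
    (fun c hc => by
      have k1 : (c : ℕ) ≠ n - 1 := fun h => hc (Fin.ext h)
      simp only [Matrix.diag_apply]
      rw [mul_Emat_apply hn, if_neg k1])]
  simp only [Matrix.diag_apply]
  rw [mul_Emat_apply hn, if_pos rfl]

lemma cmg_pow_col (hn : 0 < n) (a : Fin n → F) :
    ∀ k, k < n → ∀ i : Fin n, ((cmg a) ^ k) i ⟨0, hn⟩ = if (i : ℕ) = k then 1 else 0 := by
  intro k
  induction k with
  | zero =>
    intro _ i
    rw [pow_zero, Matrix.one_apply]
    by_cases h : i = (⟨0, hn⟩ : Fin n)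
    · rw [if_pos h, if_pos (by rw [h])]
    · rw [if_neg h, if_neg (fun hc => h (Fin.ext hc))]
  | succ k ih =>
    intro hk i
    rw [pow_succ', cmg_mul_apply hn]
    rw [ih (by omega)]
    have hni := i.isLt
    rw [if_neg (show ¬ (n - 1 : ℕ) = k by omega)]
    by_cases h0 : 0 < (i : ℕ)
    · rw [dif_pos h0, ih (by omega)]
      by_cases h1 : (i : ℕ) - 1 = k
      · rw [if_pos (show ((⟨(i:ℕ)-1, by omega⟩ : Fin n) : ℕ) = k from h1),
          if_pos (by omega)]
        ring
      · rw [if_neg (show ¬((⟨(i:ℕ)-1, by omega⟩ : Fin n) : ℕ) = k from h1),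
          if_neg (by omega)]
        ring
    · rw [dif_neg h0, if_neg (by omega)]
      ring

lemma last_row_zero (hn : 0 < n) (a : Fin n → F) (S Z : Matrix (Fin n) (Fin n) F)
    (hZ : Z * cmg a = cmg a * Z)
    (hS : cmg a * S - S * cmg a = Z * Emat F n) :
    ∀ j : Fin n, Z ⟨n - 1, by omega⟩ j = 0 := by
  intro j
  have hcomm : Commute Z (cmg a) := hZ
  have hpow : (cmg a) ^ (j : ℕ) * Z = Z * (cmg a) ^ (j : ℕ) :=
    ((hcomm.pow_right (j : ℕ))).symm
  have h1 : Matrix.trace ((cmg a) ^ (j : ℕ) * (cmg a * S - S * cmg a)) = 0 := by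
    rw [mul_sub, Matrix.trace_sub, ← mul_assoc, ← mul_assoc, ← pow_succ]
    rw [Matrix.trace_mul_comm ((cmg a) ^ (j : ℕ) * S) (cmg a), ← mul_assoc, ← pow_succ']
    exact sub_self _
  have h2 : Matrix.trace ((cmg a) ^ (j : ℕ) * (Z * Emat F n)) = Z ⟨n - 1, by omega⟩ j := by
    rw [← mul_assoc, trace_mul_Emat hn, hpow, Matrix.mul_apply]
    rw [Fintype.sum_eq_single j (fun c hc => by
      rw [cmg_pow_col hn a (j : ℕ) j.isLt c,
        if_neg (fun h => hc (Fin.ext h)), mul_zero])]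
    rw [cmg_pow_col hn a (j : ℕ) j.isLt j, if_pos rfl, mul_one]
  rw [← h2, ← hS, h1]

lemma eq_zero_of_comm_lastrow (hn : 0 < n) (a : Fin n → F) (Z : Matrix (Fin n) (Fin n) F)
    (hZ : Z * cmg a = cmg a * Z)
    (hrow : ∀ j : Fin n, Z ⟨n - 1, by omega⟩ j = 0) : Z = 0 := by
  suffices h : ∀ d (i : Fin n) (j : Fin n), (i : ℕ) = n - 1 - d → Z i j = 0 by
    ext i j
    exact h (n - 1 - (i : ℕ)) i j (by have := i.isLt; omega)
  intro d
  induction d with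
  | zero =>
    intro i j hi
    have : i = (⟨n - 1, by omega⟩ : Fin n) := Fin.ext (by simpa using hi)
    rw [this]
    exact hrow j
  | succ d ih =>
    intro i j hi
    have hni := i.isLt
    by_cases hd : n - 1 - d = n - 1 - (d + 1)
    · exact ih i j (by omega)
    · have hi1 : (i : ℕ) + 1 = n - 1 - d := by omega
      have hi1n : (i : ℕ) + 1 < n := by omega
      have hrowi1 : ∀ l : Fin n, Z ⟨(i : ℕ) + 1, hi1n⟩ l = 0 := fun l => ih _ l (by simp; omega)
      have e1 : (cmg a * Z) ⟨(i : ℕ) + 1, hi1n⟩ j = (Z * cmg a) ⟨(i : ℕ) + 1, hi1n⟩ j := by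
        rw [hZ]
      rw [cmg_mul_apply hn] at e1
      rw [dif_pos (show 0 < ((⟨(i:ℕ)+1, hi1n⟩ : Fin n) : ℕ) by simp)] at e1
      have e2 : (Z * cmg a) ⟨(i : ℕ) + 1, hi1n⟩ j = 0 := by
        rw [Matrix.mul_apply]
        exact Finset.sum_eq_zero fun l _ => by rw [hrowi1 l, zero_mul]
      rw [e2, hrow j, mul_zero, zero_add] at e1
      have : (⟨((⟨(i:ℕ)+1, hi1n⟩ : Fin n) : ℕ) - 1, by omega⟩ : Fin n) = i := Fin.ext (by simp)
      rw [this] at e1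
      exact e1

/-- `m`-th entry of the last row of `X` (mod n indexing to avoid dependent proofs). -/
def lastRow (hn : 0 < n) (X : Matrix (Fin n) (Fin n) F) (m : ℕ) : F :=
  X ⟨n - 1, by omega⟩ ⟨m % n, Nat.mod_lt _ hn⟩

lemma lastRow_eq (hn : 0 < n) (X : Matrix (Fin n) (Fin n) F) (m : ℕ) (hm : m < n)
    (c : Fin n) (hc : (c : ℕ) = m) :
    lastRow hn X m = X ⟨n - 1, by omega⟩ c := by
  unfold lastRow
  congr 1
  exact Fin.ext (by simp [Nat.mod_eq_of_lt hm, hc])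

lemma cmg_rel (hn : 0 < n) (a : Fin n → F) (X : Matrix (Fin n) (Fin n) F)
    (hX : X * cmg a = cmg a * X) :
    ∀ d (i j : Fin n), (i : ℕ) = n - 1 - d → (j : ℕ) ≤ (i : ℕ) →
      lastRow hn X (n - 1 - (i : ℕ) + (j : ℕ)) =
        X i j + ∑ l : Fin n,
          (if (i : ℕ) < (l : ℕ) then lastRow hn X ((l : ℕ) - (i : ℕ) - 1 + (j : ℕ)) * a l
           else 0) := by
  intro d
  induction d with
  | zero =>
    intro i j hi hj
    have hni := i.isLt
    have hjn := j.isLt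
    rw [Finset.sum_eq_zero (fun l _ => if_neg (by have := l.isLt; omega)), add_zero]
    rw [lastRow_eq hn X _ (by omega) j (by omega)]
    congr 1
    exact Fin.ext (by simp; omega)
  | succ d ih =>
    intro i j hi hj
    have hni := i.isLt
    have hjn := j.isLt
    by_cases hd : n - 1 - d = n - 1 - (d + 1)
    · exact ih i j (by omega) hj
    · have hi1 : (i : ℕ) + 1 = n - 1 - d := by omega
      have hi1n : (i : ℕ) + 1 < n := by omega
      have hj1n : (j : ℕ) + 1 < n := by omega
      have hstep : X ⟨(i : ℕ) + 1, hi1n⟩ ⟨(j : ℕ) + 1, hj1n⟩ =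
          a ⟨(i : ℕ) + 1, hi1n⟩ * lastRow hn X (j : ℕ) + X i j := by
        have e : (X * cmg a) ⟨(i : ℕ) + 1, hi1n⟩ j
            = (cmg a * X) ⟨(i : ℕ) + 1, hi1n⟩ j := by rw [hX]
        rw [mul_cmg_apply hn, cmg_mul_apply hn] at e
        rw [dif_pos (show (j : ℕ) < n - 1 by omega)] at e
        rw [dif_pos (show (0 : ℕ) < (i : ℕ) + 1 by omega)] at e
        have c2 : (⟨(i : ℕ) + 1 - 1, by omega⟩ : Fin n) = i := Fin.ext (by simp)
        rw [c2] at e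
        rw [lastRow_eq hn X (j : ℕ) (by omega) j rfl]
        exact e
      have hIH := ih ⟨(i : ℕ) + 1, hi1n⟩ ⟨(j : ℕ) + 1, hj1n⟩ (by simp; omega) (by simp; omega)
      simp only [Fin.val_mk] at hIH
      -- split the goal sum
      have hsplit : ∀ l : Fin n,
          (if (i : ℕ) < (l : ℕ) then lastRow hn X ((l : ℕ) - (i : ℕ) - 1 + (j : ℕ)) * a l
           else 0)
          = (if l = (⟨(i : ℕ) + 1, hi1n⟩ : Fin n)
              then lastRow hn X (j : ℕ) * a ⟨(i : ℕ) + 1, hi1n⟩ else 0)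
            + (if (i : ℕ) + 1 < (l : ℕ)
              then lastRow hn X ((l : ℕ) - ((i : ℕ) + 1) - 1 + ((j : ℕ) + 1)) * a l else 0) := by
        intro l
        have hln := l.isLt
        by_cases h1 : l = (⟨(i : ℕ) + 1, hi1n⟩ : Fin n)
        · subst h1
          rw [if_pos (by simp), if_pos rfl, if_neg (by simp)]
          rw [add_zero]
          congr 2
          simp
        · have h1' : (l : ℕ) ≠ (i : ℕ) + 1 := fun h => h1 (Fin.ext h)
          rw [if_neg h1]
          by_cases h2 : (i : ℕ) + 1 < (l : ℕ)
          · rw [if_pos h2, if_pos (by omega), zero_add]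
            congr 2
            omega
          · rw [if_neg h2, if_neg (by omega)]
            simp
      rw [Finset.sum_congr rfl (fun l _ => hsplit l), Finset.sum_add_distrib,
        Finset.sum_ite_eq' Finset.univ]
      rw [if_pos (Finset.mem_univ _)]
      rw [show n - 1 - (i : ℕ) + (j : ℕ) = n - 1 - ((i : ℕ) + 1) + ((j : ℕ) + 1) by omega]
      rw [hIH, hstep]
      ring

set_option maxHeartbeats 1000000 in
lemma keyA (hn : 0 < n) (a : Fin n → F) (X : Matrix (Fin n) (Fin n) F)
    (hX : X * cmg a = cmg a * X) :
    Emat F n * X + cmg a * tildeMat X = tildeMat X * cmg a + X * Emat F n := by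
  ext i j
  have hni := i.isLt
  have hnj := j.isLt
  rw [Matrix.add_apply, Matrix.add_apply, Emat_mul_apply hn, cmg_mul_apply hn,
    mul_cmg_apply hn, mul_Emat_apply hn]
  have ht0 : tildeMat X (⟨n - 1, by omega⟩ : Fin n) j = 0 := by
    rw [tildeMat_apply, dif_neg (by simp; omega)]
  rw [ht0, mul_zero, zero_add]
  by_cases hj : (j : ℕ) < n - 1
  · rw [dif_pos hj, if_neg (show ¬((j : ℕ) = n - 1) by omega), add_zero]
    by_cases hi0 : (i : ℕ) = 0
    · rw [if_pos hi0, dif_neg (show ¬(0 < (i : ℕ)) by omega), add_zero]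
      rw [tildeMat_apply, dif_pos (show (i : ℕ) < (j : ℕ) + 1 by omega)]
      congr 1
      exact Fin.ext (by simp; omega)
    · rw [if_neg hi0, dif_pos (show 0 < (i : ℕ) by omega), zero_add]
      rw [tildeMat_apply, tildeMat_apply]
      simp only [Fin.val_mk]
      by_cases hij : (i : ℕ) ≤ (j : ℕ)
      · rw [dif_pos (show (i : ℕ) - 1 < (j : ℕ) by omega),
          dif_pos (show (i : ℕ) < (j : ℕ) + 1 by omega)]
        congr 1
        exact Fin.ext (by simp; omega)
      · rw [dif_neg (show ¬((i : ℕ) - 1 < (j : ℕ)) by omega),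
          dif_neg (show ¬((i : ℕ) < (j : ℕ) + 1) by omega)]
  · have hj' : (j : ℕ) = n - 1 := by omega
    rw [dif_neg hj, if_pos hj']
    have hrel := cmg_rel hn a X hX (n - 1 - (i : ℕ)) i ⟨0, hn⟩ (by omega) (by simp)
    simp only [Fin.val_mk, Nat.add_zero] at hrel
    -- sum rewrite: tildeMat entries are lastRow values
    have hsum : ∀ l : Fin n, tildeMat X i l * a l =
        (if (i : ℕ) < (l : ℕ) then lastRow hn X ((l : ℕ) - (i : ℕ) - 1) * a l else 0) := by
      intro l
      have hln := l.isLt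
      rw [tildeMat_apply]
      by_cases h : (i : ℕ) < (l : ℕ)
      · rw [dif_pos h, if_pos h, lastRow_eq hn X _ (by omega) ⟨(l : ℕ) - (i : ℕ) - 1, by omega⟩ rfl]
      · rw [dif_neg h, if_neg h, zero_mul]
    rw [Finset.sum_congr rfl (fun l _ => hsum l)]
    -- left side equals lastRow (n-1-i)
    have hleft : ((if (i : ℕ) = 0 then X ⟨n - 1, by omega⟩ j else 0) +
        if h : 0 < (i : ℕ) then tildeMat X ⟨(i : ℕ) - 1, by omega⟩ j else 0)
        = lastRow hn X (n - 1 - (i : ℕ)) := by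
      by_cases hi0 : (i : ℕ) = 0
      · rw [if_pos hi0, dif_neg (show ¬(0 < (i : ℕ)) by omega), add_zero,
          lastRow_eq hn X _ (by omega) j (by omega)]
      · rw [if_neg hi0, dif_pos (show 0 < (i : ℕ) by omega), zero_add, tildeMat_apply,
          dif_pos (show (i : ℕ) - 1 < (j : ℕ) by omega),
          lastRow_eq hn X _ (by omega) ⟨(j : ℕ) - ((i : ℕ) - 1) - 1, by omega⟩ (by simp; omega)]
    rw [hleft, hrel]
    ring

end Aux

/-- for `X, Y` commuting with the companion matrix `C` and `T` arbitrary,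
`EX + CT = TC + YE` iff `X = Y` and `T - X̃` commutes with `C`. -/
theorem key_matrix_equation
    {F : Type*} [Field F] {n : ℕ}
    (p : Polynomial F) (hmonic : p.Monic) (hdeg : p.natDegree = n)
    (X Y T : Matrix (Fin n) (Fin n) F)
    (hX : X * companionMat F n p = companionMat F n p * X)
    (hY : Y * companionMat F n p = companionMat F n p * Y) :
    Emat F n * X + companionMat F n p * T = T * companionMat F n p + Y * Emat F n ↔
      (X = Y ∧
        (T - tildeMat X) * companionMat F n p =
          companionMat F n p * (T - tildeMat X)) := by
  rcases Nat.eq_zero_or_pos n with hn0 | hn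
  · subst hn0
    constructor
    · intro _
      refine ⟨?_, ?_⟩ <;> · ext i j; exact i.elim0
    · intro _
      ext i j; exact i.elim0
  · rw [companion_eq_cmg p] at hX hY ⊢
    set a := fun i : Fin n => -p.coeff (i : ℕ) with ha
    have keyid := keyA hn a X hX
    constructor
    · intro h
      have hcomm : cmg a * (T - tildeMat X) - (T - tildeMat X) * cmg a
          = (Y - X) * Emat F n := by
        have e1 : cmg a * T = T * cmg a + Y * Emat F n - Emat F n * X := by
          rw [← h]; abel
        have e2 : cmg a * tildeMat X
            = tildeMat X * cmg a + X * Emat F n - Emat F n * X := by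
          rw [← keyid]; abel
        rw [mul_sub, sub_mul, sub_mul, e1, e2]
        abel
      have hZC : (Y - X) * cmg a = cmg a * (Y - X) := by
        rw [sub_mul, mul_sub, hX, hY]
      have hrow := last_row_zero hn a (T - tildeMat X) (Y - X) hZC hcomm
      have hz : Y - X = 0 := eq_zero_of_comm_lastrow hn a _ hZC hrow
      have hXY : X = Y := (sub_eq_zero.mp hz).symm
      refine ⟨hXY, ?_⟩
      have h0 : cmg a * (T - tildeMat X) - (T - tildeMat X) * cmg a = 0 := by
        rw [hcomm, hz, zero_mul]
      exact (sub_eq_zero.mp h0).symm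
    · rintro ⟨hXY, hT⟩
      subst hXY
      have e2 : cmg a * (T - tildeMat X) = (T - tildeMat X) * cmg a := hT.symm
      calc Emat F n * X + cmg a * T
          = cmg a * (T - tildeMat X) + (Emat F n * X + cmg a * tildeMat X) := by
            rw [mul_sub]; abel
        _ = (T - tildeMat X) * cmg a + (tildeMat X * cmg a + X * Emat F n) := by
            rw [e2, keyid]
        _ = T * cmg a + X * Emat F n := by rw [sub_mul]; abel
end

section
/- Let F be a field, p a monic polynomial of degree n over F, C its companion matrix, and E ∈ M_n(F) the matrix whose (1,n) entry is 1 and all other entries are 0. Let X', Y' ∈ M_n(F) commute with C, let A, T ∈ M_n(F) be arbitrary, and set X = X' + Ã and Y = Y' + Ã, where Ã is the strictly upper triangular matrix whose (i,j) entry equals a_{n,j-i} for i < j and 0 otherwise. Then EX + CT = TC + YE holds if and only if X = Y and T - X̃ commutes with C, where X̃ is the strictly upper triangular matrix whose (i,j) entry equals x_{n,j-i} for i < j and 0 otherwise. -/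
open Matrix Polynomial

namespace KeyAux
variable {F : Type*} [Field F] {n : ℕ} (p : Polynomial F)

/-- entry with ℕ indices -/
def ent (X : Matrix (Fin n) (Fin n) F) (a b : ℕ) : F :=
  if h : a < n ∧ b < n then X ⟨a, h.1⟩ ⟨b, h.2⟩ else 0

lemma ent_eq (X : Matrix (Fin n) (Fin n) F) (i j : Fin n) : ent X (i : ℕ) (j : ℕ) = X i j := by
  unfold ent
  rw [dif_pos ⟨i.isLt, j.isLt⟩]

lemma ent_mk (X : Matrix (Fin n) (Fin n) F) (a b : ℕ) (ha : a < n) (hb : b < n) :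
    X ⟨a, ha⟩ ⟨b, hb⟩ = ent X a b := by
  unfold ent; rw [dif_pos ⟨ha, hb⟩]

lemma ent_mk_left (X : Matrix (Fin n) (Fin n) F) (a : ℕ) (ha : a < n) (j : Fin n) :
    X ⟨a, ha⟩ j = ent X a (j : ℕ) := by
  unfold ent; rw [dif_pos ⟨ha, j.isLt⟩]

lemma ent_mk_right (X : Matrix (Fin n) (Fin n) F) (i : Fin n) (b : ℕ) (hb : b < n) :
    X i ⟨b, hb⟩ = ent X (i : ℕ) b := by
  unfold ent; rw [dif_pos ⟨i.isLt, hb⟩]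

lemma tilde_apply (X : Matrix (Fin n) (Fin n) F) (i j : Fin n) :
    tildeMat X i j = if (i : ℕ) < (j : ℕ) then ent X (n-1) ((j:ℕ) - i - 1) else 0 := by
  unfold tildeMat ent
  simp only [Matrix.of_apply]
  split_ifs with h1 h2
  · rfl
  · exact absurd ⟨by omega, by omega⟩ h2
  · rfl

lemma emul_apply (X : Matrix (Fin n) (Fin n) F) (i j : Fin n) :
    (Emat F n * X) i j = if (i : ℕ) = 0 then ent X (n-1) j else 0 := by
  rw [Matrix.mul_apply]
  by_cases hi : (i : ℕ) = 0
  · simp only [hi, if_true]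
    have hn : n - 1 < n := by have := i.isLt; omega
    rw [Finset.sum_eq_single (⟨n-1, hn⟩ : Fin n)]
    · rw [show Emat F n i ⟨n-1, hn⟩ = 1 from by simp [Emat, hi], one_mul]
      exact ent_mk_left X (n-1) hn j
    · intro k _ hk
      have : (k : ℕ) ≠ n - 1 := fun h => hk (Fin.ext h)
      simp [Emat, this]
    · simp
  · simp [Emat, hi]

lemma mule_apply (X : Matrix (Fin n) (Fin n) F) (i j : Fin n) :
    (X * Emat F n) i j = if (j : ℕ) = n - 1 then ent X i 0 else 0 := by
  rw [Matrix.mul_apply]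
  by_cases hj : (j : ℕ) = n - 1
  · simp only [hj, if_true]
    have hn : 0 < n := i.pos
    rw [Finset.sum_eq_single (⟨0, hn⟩ : Fin n)]
    · rw [show Emat F n ⟨0, hn⟩ j = 1 from by simp [Emat, hj], mul_one]
      exact ent_mk_right X i 0 hn
    · intro k _ hk
      have : (k : ℕ) ≠ 0 := fun h => hk (Fin.ext h)
      simp [Emat, this]
    · simp
  · simp [Emat, hj]

lemma cmul_apply (T : Matrix (Fin n) (Fin n) F) (i j : Fin n) :
    (companionMat F n p * T) i j =
      (if 0 < (i : ℕ) then ent T ((i:ℕ)-1) j else 0) - p.coeff i * ent T (n-1) j := by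
  rw [Matrix.mul_apply]
  have key : ∀ k : Fin n, companionMat F n p i k * T k j =
      (if (k : ℕ) = n - 1 then -(p.coeff i * T k j) else 0) +
      (if ((i : ℕ) = (k : ℕ) + 1 ∧ (k : ℕ) ≠ n - 1) then T k j else 0) := by
    intro k
    simp only [companionMat, Matrix.of_apply]
    by_cases h1 : (k : ℕ) = n - 1
    · rw [if_pos h1, if_pos h1, if_neg (fun hc => hc.2 h1), add_zero]; ring
    · rw [if_neg h1, if_neg h1]
      by_cases h2 : (i : ℕ) = (k : ℕ) + 1
      · rw [if_pos h2, if_pos ⟨h2, h1⟩, one_mul, zero_add]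
      · rw [if_neg h2, if_neg (fun hc => h2 hc.1), zero_mul, add_zero]
  rw [Finset.sum_congr rfl (fun k _ => key k), Finset.sum_add_distrib]
  have hn1 : n - 1 < n := by have := i.isLt; omega
  have s1 : (∑ k : Fin n, if (k : ℕ) = n - 1 then -(p.coeff i * T k j) else 0)
      = -(p.coeff i * ent T (n-1) j) := by
    rw [Finset.sum_eq_single (⟨n-1, hn1⟩ : Fin n)]
    · rw [if_pos rfl, ent_mk_left T (n-1) hn1 j]
    · intro k _ hk
      have : (k : ℕ) ≠ n - 1 := fun h => hk (Fin.ext h)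
      simp [this]
    · simp
  have s2 : (∑ k : Fin n, if ((i : ℕ) = (k : ℕ) + 1 ∧ (k : ℕ) ≠ n - 1) then T k j else 0)
      = if 0 < (i : ℕ) then ent T ((i:ℕ)-1) j else 0 := by
    by_cases hi : 0 < (i : ℕ)
    · have hi1 : (i : ℕ) - 1 < n := by have := i.isLt; omega
      rw [if_pos hi, Finset.sum_eq_single (⟨(i:ℕ)-1, hi1⟩ : Fin n)]
      · have c1 : (i : ℕ) = ((i:ℕ)-1) + 1 := by omega
        have c2 : (i : ℕ) - 1 ≠ n - 1 := by have := i.isLt; omega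
        rw [if_pos ⟨c1, c2⟩, ent_mk_left T ((i:ℕ)-1) hi1 j]
      · intro k _ hk
        have : ¬ ((i : ℕ) = (k : ℕ) + 1 ∧ (k : ℕ) ≠ n - 1) := by
          rintro ⟨h1, -⟩
          exact hk (Fin.ext (show (k:ℕ) = (i:ℕ) - 1 by omega))
        simp [this]
      · simp
    · rw [if_neg hi]
      apply Finset.sum_eq_zero
      intro k _
      have : ¬ ((i : ℕ) = (k : ℕ) + 1 ∧ (k : ℕ) ≠ n - 1) := by
        rintro ⟨h1, -⟩; omega
      simp [this]
  rw [s1, s2]; ring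

lemma mulc_apply (T : Matrix (Fin n) (Fin n) F) (i j : Fin n) :
    (T * companionMat F n p) i j =
      if h : (j : ℕ) < n - 1 then T i ⟨(j:ℕ)+1, by omega⟩
      else -∑ k : Fin n, p.coeff k * T i k := by
  rw [Matrix.mul_apply]
  by_cases hj : (j : ℕ) < n - 1
  · rw [dif_pos hj, Finset.sum_eq_single (⟨(j:ℕ)+1, by omega⟩ : Fin n)]
    · simp only [companionMat, Matrix.of_apply]
      split_ifs with h1
      · omega
      · exact mul_one _
    · intro k _ hk
      have hk' : (k : ℕ) ≠ (j : ℕ) + 1 := fun h => hk (Fin.ext h)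
      simp only [companionMat, Matrix.of_apply]
      rw [if_neg (by omega), if_neg (by omega), mul_zero]
    · simp
  · have hj' : (j : ℕ) = n - 1 := by have := j.isLt; omega
    rw [dif_neg hj, ← Finset.sum_neg_distrib]
    apply Finset.sum_congr rfl
    intro k _
    simp only [companionMat, Matrix.of_apply, if_pos hj']
    ring


lemma rel {X' : Matrix (Fin n) (Fin n) F}
    (h : X' * companionMat F n p = companionMat F n p * X')
    (a b : ℕ) (ha1 : 0 < a) (ha : a < n) (hb : b < n - 1) :
    ent X' (a-1) b = ent X' a (b+1) + p.coeff a * ent X' (n-1) b := by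
  have hbn : b < n := by omega
  have key := congrFun (congrFun h ⟨a, ha⟩) ⟨b, hbn⟩
  rw [mulc_apply, cmul_apply] at key
  rw [dif_pos (show ((⟨b, hbn⟩:Fin n) : ℕ) < n - 1 from hb)] at key
  rw [if_pos (show 0 < ((⟨a, ha⟩:Fin n) : ℕ) from ha1)] at key
  rw [ent_mk_right X' ⟨a, ha⟩ (b+1) (by omega)] at key
  simp only [Fin.val_mk] at key
  linear_combination -key

lemma ent_tilde (X : Matrix (Fin n) (Fin n) F) (a b : ℕ) :
    ent (tildeMat X) a b = if a < b ∧ b < n then ent X (n-1) (b-a-1) else 0 := by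
  by_cases hab : a < n ∧ b < n
  · rw [← ent_mk (tildeMat X) a b hab.1 hab.2, tilde_apply]
    by_cases h2 : a < b
    · rw [if_pos (show ((⟨a, hab.1⟩ : Fin n) : ℕ) < ((⟨b, hab.2⟩ : Fin n) : ℕ) from h2),
        if_pos ⟨h2, hab.2⟩]
    · rw [if_neg (show ¬ ((⟨a, hab.1⟩ : Fin n) : ℕ) < ((⟨b, hab.2⟩ : Fin n) : ℕ) from h2),
        if_neg (fun hc => h2 hc.1)]
  · rw [if_neg (fun hc => hab ⟨by omega, hc.2⟩)]
    unfold ent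
    rw [dif_neg hab]

lemma aux (hn : 0 < n) {X' : Matrix (Fin n) (Fin n) F}
    (h : X' * companionMat F n p = companionMat F n p * X') (m : ℕ) :
    ∀ i : ℕ, i + m ≤ n - 1 →
    ent X' i 0 = ent X' (i+m) m +
      ∑ k ∈ Finset.range n,
        (if i < k ∧ k ≤ i + m then p.coeff k * ent X' (n-1) (k-i-1) else 0) := by
  induction m with
  | zero =>
    intro i him
    rw [Finset.sum_eq_zero (fun k _ => if_neg (by omega)), add_zero, Nat.add_zero]
  | succ m IH =>
    intro i him
    have hstep := rel p h (i+m+1) m (by omega) (by omega) (by omega)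
    have e1 : i+m+1-1 = i+m := by omega
    rw [e1] at hstep
    have hsum : (∑ k ∈ Finset.range n,
          (if i < k ∧ k ≤ i+(m+1) then p.coeff k * ent X' (n-1) (k-i-1) else 0))
        = (∑ k ∈ Finset.range n,
            (if i < k ∧ k ≤ i+m then p.coeff k * ent X' (n-1) (k-i-1) else 0))
          + p.coeff (i+m+1) * ent X' (n-1) m := by
      have e2 : ∀ k ∈ Finset.range n,
          (if i < k ∧ k ≤ i+(m+1) then p.coeff k * ent X' (n-1) (k-i-1) else 0)
          = (if i < k ∧ k ≤ i+m then p.coeff k * ent X' (n-1) (k-i-1) else 0)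
            + (if k = i+m+1 then p.coeff k * ent X' (n-1) (k-i-1) else 0) := by
        intro k _
        by_cases h1 : k = i+m+1
        · subst h1
          rw [if_pos (by omega), if_neg (by omega), if_pos rfl, zero_add]
        · by_cases h2 : i < k ∧ k ≤ i+m
          · rw [if_pos (by omega), if_pos h2, if_neg h1, add_zero]
          · rw [if_neg (by omega), if_neg h2, if_neg h1, add_zero]
      rw [Finset.sum_congr rfl e2, Finset.sum_add_distrib,
        Finset.sum_ite_eq' (Finset.range n) (i+m+1)
          (fun k => p.coeff k * ent X' (n-1) (k-i-1)),
        if_pos (Finset.mem_range.mpr (by omega))]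
      have e3 : i+m+1-i-1 = m := by omega
      rw [e3]
    rw [hsum, IH i (by omega)]
    have e4 : i + (m+1) = (i + m) + 1 := by omega
    rw [e4, hstep]
    ring

lemma comm_col0 (hn : 0 < n) {X' : Matrix (Fin n) (Fin n) F}
    (h : X' * companionMat F n p = companionMat F n p * X') (i : Fin n) :
    ent X' (i : ℕ) 0 = ent X' (n-1) (n-1-(i:ℕ)) +
      ∑ k ∈ Finset.range n,
        (if (i:ℕ) < k then p.coeff k * ent X' (n-1) (k-(i:ℕ)-1) else 0) := by
  have key := aux p hn h (n-1-(i:ℕ)) (i:ℕ) (by have := i.isLt; omega)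
  have e0 : (i:ℕ) + (n-1-(i:ℕ)) = n-1 := by have := i.isLt; omega
  rw [e0] at key
  rw [key]
  congr 1
  apply Finset.sum_congr rfl
  intro k hk
  have hk' : k < n := Finset.mem_range.mp hk
  by_cases hik : (i:ℕ) < k
  · rw [if_pos ⟨hik, by omega⟩, if_pos hik]
  · rw [if_neg (fun hc => hik hc.1), if_neg hik]

lemma keyId (hn : 0 < n) {X' : Matrix (Fin n) (Fin n) F}
    (h : X' * companionMat F n p = companionMat F n p * X') :
    Emat F n * X' + companionMat F n p * tildeMat X'
      - tildeMat X' * companionMat F n p = X' * Emat F n := by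
  ext i j
  rw [Matrix.sub_apply, Matrix.add_apply, emul_apply, cmul_apply, mulc_apply, mule_apply]
  rw [ent_tilde, ent_tilde, if_neg (show ¬ (n-1 < (j:ℕ) ∧ (j:ℕ) < n) from
    fun hc => by have := j.isLt; omega), mul_zero]
  by_cases hj : (j:ℕ) < n - 1
  · rw [dif_pos hj, if_neg (show ¬ (j:ℕ) = n - 1 by omega)]
    rw [ent_mk_right (tildeMat X') i ((j:ℕ)+1) (by omega), ent_tilde]
    by_cases hi : (i:ℕ) = 0
    · rw [if_pos hi, if_neg (show ¬ 0 < (i:ℕ) by omega)]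
      rw [if_pos (show (i:ℕ) < (j:ℕ)+1 ∧ (j:ℕ)+1 < n by omega)]
      rw [show ((j:ℕ)+1-(i:ℕ)-1 : ℕ) = (j:ℕ) by omega]
      ring
    · rw [if_neg hi, if_pos (show 0 < (i:ℕ) by omega)]
      by_cases hij : (i:ℕ) - 1 < (j:ℕ)
      · rw [if_pos (show (i:ℕ)-1 < (j:ℕ) ∧ (j:ℕ) < n by exact ⟨hij, j.isLt⟩),
          if_pos (show (i:ℕ) < (j:ℕ)+1 ∧ (j:ℕ)+1 < n by omega)]
        rw [show ((j:ℕ)-((i:ℕ)-1)-1 : ℕ) = (j:ℕ)+1-(i:ℕ)-1 by omega]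
        ring
      · rw [if_neg (fun hc => hij hc.1), if_neg (show ¬ ((i:ℕ) < (j:ℕ)+1 ∧ (j:ℕ)+1 < n) by omega)]
        ring
  · have hj' : (j:ℕ) = n - 1 := by have := j.isLt; omega
    rw [dif_neg hj, if_pos hj']
    have hsum : (∑ k : Fin n, p.coeff (k:ℕ) * tildeMat X' i k)
        = ∑ k ∈ Finset.range n,
            (if (i:ℕ) < k then p.coeff k * ent X' (n-1) (k-(i:ℕ)-1) else 0) := by
      have e5 : ∀ k : Fin n, p.coeff (k:ℕ) * tildeMat X' i k
          = (fun t : ℕ => if (i:ℕ) < t then p.coeff t * ent X' (n-1) (t-(i:ℕ)-1) else 0)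
              ((k:ℕ)) := by
        intro k
        simp only
        rw [tilde_apply, mul_ite, mul_zero]
      rw [Finset.sum_congr rfl (fun k _ => e5 k)]
      exact Fin.sum_univ_eq_sum_range (fun t : ℕ => if (i:ℕ) < t then p.coeff t * ent X' (n-1) (t-(i:ℕ)-1) else 0) n
    rw [hsum]
    have hcc := comm_col0 p hn h i
    by_cases hi : (i:ℕ) = 0
    · rw [if_pos hi, if_neg (show ¬ 0 < (i:ℕ) by omega)]
      rw [show (n-1-(i:ℕ) : ℕ) = (j:ℕ) by omega] at hcc
      linear_combination -hcc
    · rw [if_neg hi, if_pos (show 0 < (i:ℕ) by omega)]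
      rw [if_pos (show (i:ℕ)-1 < (j:ℕ) ∧ (j:ℕ) < n by have := i.isLt; omega)]
      rw [show ((j:ℕ)-((i:ℕ)-1)-1 : ℕ) = n-1-(i:ℕ) by omega]
      linear_combination -hcc

lemma pow_col0 (hn : 0 < n) : ∀ (m : ℕ), m < n → ∀ i : Fin n,
    ((companionMat F n p)^m) i ⟨0, hn⟩ = if (i:ℕ) = m then 1 else 0 := by
  intro m
  induction m with
  | zero =>
    intro _ i
    rw [pow_zero, Matrix.one_apply]
    by_cases hi : (i:ℕ) = 0
    · rw [if_pos (Fin.ext hi), if_pos hi]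
    · rw [if_neg (fun hc => hi (congrArg Fin.val hc)), if_neg hi]
  | succ m IH =>
    intro hm i
    rw [pow_succ', cmul_apply]
    simp only [Fin.val_mk]
    have hlast : ent ((companionMat F n p)^m) (n-1) 0 = 0 := by
      rw [← ent_mk _ (n-1) 0 (by omega) hn, IH (by omega) ⟨n-1, by omega⟩,
        if_neg (show ¬ ((⟨n-1, by omega⟩ : Fin n) : ℕ) = m by
          simp only [Fin.val_mk]; omega)]
    rw [hlast, mul_zero, sub_zero]
    by_cases hi : 0 < (i:ℕ)
    · rw [if_pos hi, ← ent_mk _ ((i:ℕ)-1) 0 (by omega) hn,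
        IH (by omega) ⟨(i:ℕ)-1, by omega⟩]
      simp only [Fin.val_mk]
      by_cases h2 : (i:ℕ) = m+1
      · rw [if_pos (by omega), if_pos h2]
      · rw [if_neg (by omega), if_neg h2]
    · rw [if_neg hi, if_neg (by omega)]

lemma commute_of_lastcol (hn : 0 < n) {S N : Matrix (Fin n) (Fin n) F}
    (hN : ∀ i j : Fin n, (j:ℕ) < n - 1 → N i j = 0)
    (h : companionMat F n p * S - S * companionMat F n p = N) :
    S * companionMat F n p = companionMat F n p * S := by
  have hrec : ∀ (i j : Fin n), ∀ hj : (j:ℕ) < n - 1,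
      S i ⟨(j:ℕ)+1, by omega⟩ =
      (if 0 < (i:ℕ) then ent S ((i:ℕ)-1) (j:ℕ) else 0)
        - p.coeff (i:ℕ) * ent S (n-1) (j:ℕ) := by
    intro i j hj
    have h2 := congrFun (congrFun h i) j
    rw [Matrix.sub_apply, cmul_apply, mulc_apply, dif_pos hj, hN i j hj, sub_eq_zero] at h2
    exact h2.symm
  set W : Matrix (Fin n) (Fin n) F :=
    ∑ k : Fin n, (S k ⟨0, hn⟩) • ((companionMat F n p) ^ (k:ℕ)) with hWdef
  have hWc : W * companionMat F n p = companionMat F n p * W := by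
    rw [hWdef, Finset.sum_mul, Finset.mul_sum]
    apply Finset.sum_congr rfl
    intro k _
    rw [smul_mul_assoc, mul_smul_comm, ← pow_succ, ← pow_succ']
  have hW0 : ∀ i : Fin n, W i ⟨0, hn⟩ = S i ⟨0, hn⟩ := by
    intro i
    have e : W i ⟨0,hn⟩ = ∑ k : Fin n, (S k ⟨0,hn⟩) * (((companionMat F n p)^(k:ℕ)) i ⟨0,hn⟩) := by
      rw [hWdef]
      simp [Matrix.sum_apply, Matrix.smul_apply, smul_eq_mul]
    rw [e, Finset.sum_congr rfl (fun k _ => by rw [pow_col0 p hn (k:ℕ) k.isLt i]),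
      Finset.sum_eq_single i]
    · rw [if_pos rfl, mul_one]
    · intro k _ hk
      rw [if_neg (fun hc => hk (Fin.ext hc.symm)), mul_zero]
    · simp
  have hWrec : ∀ (i j : Fin n), ∀ hj : (j:ℕ) < n - 1,
      W i ⟨(j:ℕ)+1, by omega⟩ =
      (if 0 < (i:ℕ) then ent W ((i:ℕ)-1) (j:ℕ) else 0)
        - p.coeff (i:ℕ) * ent W (n-1) (j:ℕ) := by
    intro i j hj
    have h2 := congrFun (congrFun hWc i) j
    rw [cmul_apply, mulc_apply, dif_pos hj] at h2
    exact h2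
  have claim : ∀ m : ℕ, ∀ hm : m < n, ∀ i : Fin n, S i ⟨m, hm⟩ = W i ⟨m, hm⟩ := by
    intro m
    induction m with
    | zero => intro hm i; exact (hW0 i).symm
    | succ m IH =>
      intro hm i
      have hmn : m < n - 1 := by omega
      have eIH : ∀ a : ℕ, a < n → ent S a m = ent W a m := by
        intro a ha
        rw [← ent_mk S a m ha (by omega), ← ent_mk W a m ha (by omega)]
        exact IH (by omega) ⟨a, ha⟩
      have e1 := hrec i ⟨m, by omega⟩ hmn
      have e2 := hWrec i ⟨m, by omega⟩ hmn
      simp only [Fin.val_mk] at e1 e2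
      have e3 : (if 0 < (i:ℕ) then ent S ((i:ℕ)-1) m else 0) - p.coeff (i:ℕ) * ent S (n-1) m
          = (if 0 < (i:ℕ) then ent W ((i:ℕ)-1) m else 0) - p.coeff (i:ℕ) * ent W (n-1) m := by
        rw [eIH (n-1) (by omega)]
        by_cases hi : 0 < (i:ℕ)
        · rw [if_pos hi, if_pos hi, eIH ((i:ℕ)-1) (by omega)]
        · rw [if_neg hi, if_neg hi]
      exact e1.trans (e3.trans e2.symm)
  have hSW : S = W := by
    ext i j
    exact claim (j:ℕ) j.isLt i
  rw [hSW, hWc]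

lemma eq_zero_of_commute_col0 (hn : 0 < n) {W : Matrix (Fin n) (Fin n) F}
    (hc : W * companionMat F n p = companionMat F n p * W)
    (h0 : ∀ i : Fin n, W i ⟨0, hn⟩ = 0) : W = 0 := by
  have hrec : ∀ (i j : Fin n), ∀ hj : (j:ℕ) < n - 1,
      W i ⟨(j:ℕ)+1, by omega⟩ =
      (if 0 < (i:ℕ) then ent W ((i:ℕ)-1) (j:ℕ) else 0)
        - p.coeff (i:ℕ) * ent W (n-1) (j:ℕ) := by
    intro i j hj
    have h2 := congrFun (congrFun hc i) j
    rw [cmul_apply, mulc_apply, dif_pos hj] at h2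
    exact h2
  have claim : ∀ m : ℕ, ∀ hm : m < n, ∀ i : Fin n, W i ⟨m, hm⟩ = 0 := by
    intro m
    induction m with
    | zero => intro hm i; exact h0 i
    | succ m IH =>
      intro hm i
      have hmn : m < n - 1 := by omega
      have eIH : ∀ a : ℕ, a < n → ent W a m = 0 := by
        intro a ha
        rw [← ent_mk W a m ha (by omega)]
        exact IH (by omega) ⟨a, ha⟩
      have e1 := hrec i ⟨m, by omega⟩ hmn
      simp only [Fin.val_mk] at e1
      rw [e1, eIH (n-1) (by omega), mul_zero, sub_zero]
      by_cases hi : 0 < (i:ℕ)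
      · rw [if_pos hi, eIH ((i:ℕ)-1) (by omega)]
      · rw [if_neg hi]
  ext i j
  rw [Matrix.zero_apply]
  exact claim (j:ℕ) j.isLt i

lemma tilde_add_tilde (X' A : Matrix (Fin n) (Fin n) F) :
    tildeMat (X' + tildeMat A) = tildeMat X' := by
  ext i j
  rw [tilde_apply, tilde_apply]
  by_cases h : (i:ℕ) < (j:ℕ)
  · rw [if_pos h, if_pos h]
    have hb : (j:ℕ) - (i:ℕ) - 1 < n := by have := j.isLt; omega
    rw [← ent_mk _ (n-1) ((j:ℕ)-(i:ℕ)-1) (by have := j.isLt; omega) hb,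
      ← ent_mk X' (n-1) ((j:ℕ)-(i:ℕ)-1) (by have := j.isLt; omega) hb]
    rw [show ((X' + tildeMat A) : Matrix (Fin n) (Fin n) F)
        ⟨n-1, by have := j.isLt; omega⟩ ⟨(j:ℕ)-(i:ℕ)-1, hb⟩
      = X' ⟨n-1, by have := j.isLt; omega⟩ ⟨(j:ℕ)-(i:ℕ)-1, hb⟩
        + tildeMat A ⟨n-1, by have := j.isLt; omega⟩ ⟨(j:ℕ)-(i:ℕ)-1, hb⟩ from rfl]
    rw [show tildeMat A ⟨n-1, by have := j.isLt; omega⟩ ⟨(j:ℕ)-(i:ℕ)-1, hb⟩ = 0 from by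
      rw [tilde_apply, if_neg (show ¬ ((⟨n-1, by have := j.isLt; omega⟩ : Fin n) : ℕ) <
        ((⟨(j:ℕ)-(i:ℕ)-1, hb⟩ : Fin n) : ℕ) by simp only [Fin.val_mk]; have := j.isLt; omega)]]
    rw [add_zero]
  · rw [if_neg h, if_neg h]

lemma E_mul_tilde (A : Matrix (Fin n) (Fin n) F) : Emat F n * tildeMat A = 0 := by
  ext i j
  rw [emul_apply, ent_tilde, Matrix.zero_apply,
    if_neg (show ¬ (n-1 < (j:ℕ) ∧ (j:ℕ) < n) from fun hc => by have := j.isLt; omega)]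
  split_ifs <;> rfl

lemma tilde_mul_E (A : Matrix (Fin n) (Fin n) F) : tildeMat A * Emat F n = 0 := by
  ext i j
  rw [mule_apply, ent_tilde, Matrix.zero_apply,
    if_neg (show ¬ ((i:ℕ) < 0 ∧ 0 < n) from fun hc => by omega)]
  split_ifs <;> rfl

end KeyAux

/-- with `X', Y'` commuting with the companion matrix `C`, `A, T`
arbitrary, `X = X' + Ã` and `Y = Y' + Ã`, the equation `EX + CT = TC + YE` holds
iff `X = Y` and `T - X̃` commutes with `C`. -/
theorem key_matrix_equation_general
    {F : Type*} [Field F] {n : ℕ}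
    (p : Polynomial F) (hmonic : p.Monic) (hdeg : p.natDegree = n)
    (X' Y' A T X Y : Matrix (Fin n) (Fin n) F)
    (hX' : X' * companionMat F n p = companionMat F n p * X')
    (hY' : Y' * companionMat F n p = companionMat F n p * Y')
    (hXdef : X = X' + tildeMat A) (hYdef : Y = Y' + tildeMat A) :
    Emat F n * X + companionMat F n p * T = T * companionMat F n p + Y * Emat F n ↔
      (X = Y ∧
        (T - tildeMat X) * companionMat F n p =
          companionMat F n p * (T - tildeMat X)) := by
  rcases Nat.eq_zero_or_pos n with hn | hn
  · subst hn
    have triv : ∀ M N : Matrix (Fin 0) (Fin 0) F, M = N := by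
      intro M N; ext i j; exact i.elim0
    constructor
    · intro _; exact ⟨triv _ _, triv _ _⟩
    · intro _; exact triv _ _
  · have htX : tildeMat X = tildeMat X' := by rw [hXdef]; exact KeyAux.tilde_add_tilde X' A
    have hEX : Emat F n * X = Emat F n * X' := by
      rw [hXdef, mul_add, KeyAux.E_mul_tilde, add_zero]
    have hXE : X * Emat F n = X' * Emat F n := by
      rw [hXdef, add_mul, KeyAux.tilde_mul_E, add_zero]
    have keyIdX : Emat F n * X + companionMat F n p * tildeMat X
        - tildeMat X * companionMat F n p = X * Emat F n := by
      rw [hEX, htX, hXE]; exact KeyAux.keyId p hn hX'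
    constructor
    · intro heq
      have hA : companionMat F n p * T - T * companionMat F n p
          = Y * Emat F n - Emat F n * X := by
        rw [sub_eq_sub_iff_add_eq_add, add_comm (companionMat F n p * T), add_comm (Y * Emat F n)]
        exact heq
      have hB : companionMat F n p * tildeMat X - tildeMat X * companionMat F n p
          = X * Emat F n - Emat F n * X := by
        rw [sub_eq_sub_iff_add_eq_add, add_comm (companionMat F n p * tildeMat X)]
        exact sub_eq_iff_eq_add.mp keyIdX
      have h1 : companionMat F n p * (T - tildeMat X) - (T - tildeMat X) * companionMat F n p
          = (Y - X) * Emat F n := by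
        calc companionMat F n p * (T - tildeMat X) - (T - tildeMat X) * companionMat F n p
            = (companionMat F n p * T - T * companionMat F n p)
              - (companionMat F n p * tildeMat X - tildeMat X * companionMat F n p) := by
              rw [mul_sub, sub_mul]; abel
          _ = (Y * Emat F n - Emat F n * X) - (X * Emat F n - Emat F n * X) := by rw [hA, hB]
          _ = (Y - X) * Emat F n := by rw [sub_mul]; abel
      have hN : ∀ i j : Fin n, (j:ℕ) < n - 1 → ((Y - X) * Emat F n) i j = 0 := by
        intro i j hj
        rw [KeyAux.mule_apply, if_neg (show ¬ (j:ℕ) = n - 1 by omega)]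
      have hcomm : (T - tildeMat X) * companionMat F n p
          = companionMat F n p * (T - tildeMat X) :=
        KeyAux.commute_of_lastcol p hn hN h1
      have hzero : (Y - X) * Emat F n = 0 := by
        rw [← h1, hcomm, sub_self]
      have hcol : ∀ i : Fin n, Y i ⟨0, hn⟩ = X i ⟨0, hn⟩ := by
        intro i
        have h4 := congrFun (congrFun hzero i) ⟨n-1, by omega⟩
        rw [KeyAux.mule_apply, Matrix.zero_apply,
          if_pos (show ((⟨n-1, by omega⟩ : Fin n) : ℕ) = n-1 from rfl),
          ← KeyAux.ent_mk_right (Y - X) i 0 hn, Matrix.sub_apply, sub_eq_zero] at h4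
        exact h4
      have hcol0tilde : ∀ M : Matrix (Fin n) (Fin n) F, ∀ i : Fin n,
          tildeMat M i ⟨0, hn⟩ = 0 := by
        intro M i
        rw [KeyAux.tilde_apply,
          if_neg (show ¬ (i:ℕ) < ((⟨0, hn⟩ : Fin n) : ℕ) from by
            simp only [Fin.val_mk]; omega)]
      have hXYcol : ∀ i : Fin n, (X' - Y') i ⟨0, hn⟩ = 0 := by
        intro i
        have h2 : X i ⟨0, hn⟩ = X' i ⟨0, hn⟩ := by
          rw [hXdef, Matrix.add_apply, hcol0tilde A i, add_zero]
        have h3 : Y i ⟨0, hn⟩ = Y' i ⟨0, hn⟩ := by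
          rw [hYdef, Matrix.add_apply, hcol0tilde A i, add_zero]
        rw [Matrix.sub_apply, ← h2, ← h3, hcol i, sub_self]
      have hWc : (X' - Y') * companionMat F n p = companionMat F n p * (X' - Y') := by
        rw [sub_mul, mul_sub, hX', hY']
      have hsub : X' - Y' = 0 := KeyAux.eq_zero_of_commute_col0 p hn hWc hXYcol
      have hX'Y' : X' = Y' := by rwa [sub_eq_zero] at hsub
      exact ⟨by rw [hXdef, hYdef, hX'Y'], hcomm⟩
    · rintro ⟨hXY, hcomm⟩
      rw [← sub_eq_zero]
      have expand : (Emat F n * X + companionMat F n p * T)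
            - (T * companionMat F n p + Y * Emat F n)
          = ((Emat F n * X + companionMat F n p * tildeMat X
              - tildeMat X * companionMat F n p) - Y * Emat F n)
            + (companionMat F n p * (T - tildeMat X)
              - (T - tildeMat X) * companionMat F n p) := by
        rw [mul_sub, sub_mul]; abel
      rw [expand, keyIdX, hcomm, hXY]
      simp
end

section
/- Let F be a field, p a monic polynomial of degree n over F, C its companion matrix, and E ∈ M_n(F) the matrix whose (1,n) entry is 1 and all other entries are 0. Let X ∈ M_n(F) commute with C and let T ∈ M_n(F) be arbitrary. Then TC = CT + EX holds if and only if X = 0 and T commutes with C. -/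
open Matrix Polynomial

/-! Proof idea: if `EX = TC - CT`, then `tr(E X C^k) = tr((TC - CT) C^k) = 0` for every `k`,
and `tr(E X C^k)` is the `(n,1)` entry of `X C^k`, which is `X_{n,k+1}` because `C^k e₁ = e_{k+1}`.
So the last row of `X` vanishes. Comparing rows of `XC = CX` then shows that row `i + 1` of `X`
vanishing forces row `i` to vanish, since left multiplication by `C` shifts rows down modulo the
last row. Hence `X = 0`. -/

theorem Matrix.trace_sub_mul_of_commute {ι R : Type*} [Fintype ι] [CommRing R]
    {A B : Matrix ι ι R} (T : Matrix ι ι R) (hAB : Commute A B) :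
    trace ((T * A - A * T) * B) = 0 := by
  rw [sub_mul, trace_sub, sub_eq_zero, Matrix.mul_assoc, Matrix.mul_assoc, trace_mul_comm A,
    Matrix.mul_assoc, hAB.eq]

section

variable {F : Type*} [Field F] {m : ℕ}

theorem Emat_eq_single : Emat F (m + 1) = single 0 (Fin.last m) 1 := by
  ext i j
  simp only [Emat, of_apply, single_apply, Fin.ext_iff, Fin.val_zero, Fin.val_last,
    add_tsub_cancel_right, eq_comm]

theorem trace_Emat_mul (M : Matrix (Fin (m + 1)) (Fin (m + 1)) F) :
    trace (Emat F (m + 1) * M) = M (Fin.last m) 0 := by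
  rw [Emat_eq_single, trace_single_mul, one_smul]

variable (p : Polynomial F)

theorem companionMat_apply_castSucc (i : Fin (m + 1)) (t : Fin m) :
    companionMat F (m + 1) p i t.castSucc = if i = t.succ then 1 else 0 := by
  simp [companionMat, t.isLt.ne, Fin.ext_iff]

theorem companionMat_pow_apply_zero (k : Fin (m + 1)) (i : Fin (m + 1)) :
    (companionMat F (m + 1) p ^ (k : ℕ)) i 0 = if i = k then 1 else 0 := by
  induction k using Fin.induction generalizing i with
  | zero => simp [one_apply]
  | succ k ih =>
    rw [Fin.val_castSucc] at ih
    rw [Fin.val_succ, pow_succ', mul_apply, Finset.sum_eq_single k.castSucc]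
    · rw [ih, if_pos rfl, mul_one, companionMat_apply_castSucc]
    · intro t _ ht
      rw [ih, if_neg ht, mul_zero]
    · simp

theorem mul_companionMat_pow_apply_zero (M : Matrix (Fin (m + 1)) (Fin (m + 1)) F)
    (i j : Fin (m + 1)) : (M * companionMat F (m + 1) p ^ (j : ℕ)) i 0 = M i j := by
  simp [mul_apply, companionMat_pow_apply_zero]

theorem companionMat_mul_apply_succ (M : Matrix (Fin (m + 1)) (Fin (m + 1)) F)
    (i : Fin m) (j : Fin (m + 1)) :
    (companionMat F (m + 1) p * M) i.succ j =
      M i.castSucc j - p.coeff (i + 1) * M (Fin.last m) j := by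
  rw [mul_apply, Fin.sum_univ_castSucc]
  simp only [companionMat_apply_castSucc, Fin.succ_inj, ite_mul, one_mul, zero_mul,
    Finset.sum_ite_eq, Finset.mem_univ, if_true]
  simp [companionMat, sub_eq_add_neg]

theorem eq_zero_of_commute_companionMat {X : Matrix (Fin (m + 1)) (Fin (m + 1)) F}
    (hX : Commute X (companionMat F (m + 1) p)) (hlast : ∀ j, X (Fin.last m) j = 0) :
    X = 0 := by
  suffices hrow : ∀ i j, X i j = 0 from Matrix.ext hrow
  intro i
  induction i using Fin.reverseInduction with
  | last => exact hlast
  | cast i ih =>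
    intro j
    have hXC : (X * companionMat F (m + 1) p) i.succ j = 0 := by
      simp [mul_apply, ih]
    rwa [hX.eq, companionMat_mul_apply_succ, hlast, mul_zero, sub_zero] at hXC

end

theorem eq_TC_CT_EX_general
    {F : Type*} [Field F] {n : ℕ}
    (p : Polynomial F)
    (X T : Matrix (Fin n) (Fin n) F)
    (hX : X * companionMat F n p = companionMat F n p * X) :
    T * companionMat F n p = companionMat F n p * T + Emat F n * X ↔
      (X = 0 ∧ T * companionMat F n p = companionMat F n p * T) := by
  refine ⟨fun h => ?_, fun ⟨hX0, hT⟩ => by rw [hT, hX0, Matrix.mul_zero, add_zero]⟩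
  suffices hX0 : X = 0 by rw [hX0, Matrix.mul_zero, add_zero] at h; exact ⟨hX0, h⟩
  cases n with
  | zero => exact Subsingleton.elim _ _
  | succ m =>
    set C := companionMat F (m + 1) p
    have hEX : Emat F (m + 1) * X = T * C - C * T := by rw [h, add_sub_cancel_left]
    refine eq_zero_of_commute_companionMat p hX fun j => ?_
    calc X (Fin.last m) j
        = trace (Emat F (m + 1) * X * C ^ (j : ℕ)) := by
          rw [Matrix.mul_assoc, trace_Emat_mul, mul_companionMat_pow_apply_zero]
      _ = 0 := by rw [hEX, trace_sub_mul_of_commute T (Commute.self_pow C _)]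

/-- for `X` commuting with the companion matrix `C` and `T` arbitrary,
`TC = CT + EX` iff `X = 0` and `T` commutes with `C`. -/
theorem eq_TC_CT_EX
    {F : Type*} [Field F] {n : ℕ}
    (p : Polynomial F) (hmonic : p.Monic) (hdeg : p.natDegree = n)
    (X T : Matrix (Fin n) (Fin n) F)
    (hX : X * companionMat F n p = companionMat F n p * X) :
    T * companionMat F n p = companionMat F n p * T + Emat F n * X ↔
      (X = 0 ∧ T * companionMat F n p = companionMat F n p * T) :=
  eq_TC_CT_EX_general p X T hX
end

section
/- Let F be a field, p a monic irreducible and separable polynomial of degree n over F, and C its companion matrix. Let X and Y be n×n matrices over F commuting with C and let T ∈ M_n(F) be arbitrary. Then X + CT = TC + Y holds if and only if X = Y and T commutes with C. -/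
/-!
Let `K = F[x]/(p)` and `α` the class of `x`. In the basis `1, α, …, α^(n-1)` the companion
matrix `C` is the matrix `L_α` of multiplication by `α`, and since `α` generates `K`, every matrix
commuting with `C` is `L_z` for some `z ∈ K`. If `X + CT = TC + Y`, then `D = X - Y = TC - CT`
commutes with `C`, so `D = L_z`, and for every `w ∈ K`
`Tr_{K/F}(z w) = tr(D L_w) = tr(T C L_w) - tr(C T L_w) = 0` because `L_w` commutes with `C`.
As `p` is separable, the trace form of `K/F` is nondegenerate, hence `z = 0`, i.e. `X = Y` and `TC = CT`.
-/

open Matrix Polynomial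

theorem Module.End.eq_lmul_of_commute_lmul {F K : Type*} [CommSemiring F] [CommSemiring K]
    [Algebra F K] {α : K} (hα : Algebra.adjoin F {α} = ⊤) {f : Module.End F K}
    (hf : Commute f (Algebra.lmul F K α)) : f = Algebra.lmul F K (f 1) := by
  have hle : Algebra.adjoin F {α} ≤ (Subalgebra.centralizer F {f}).comap (Algebra.lmul F K) :=
    Algebra.adjoin_le <| Set.singleton_subset_iff.2 <|
      (Subalgebra.mem_centralizer_iff F).2 fun g hg => hg ▸ hf.eq
  have hcomm (z : K) : Commute f (Algebra.lmul F K z) :=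
    (Subalgebra.mem_centralizer_iff F).1 (hle (hα ▸ trivial : z ∈ Algebra.adjoin F {α})) f rfl
  ext z
  simpa [mul_comm] using LinearMap.congr_fun (hcomm z) 1

theorem Algebra.exists_eq_leftMulMatrix_of_commute {F K ι : Type*} [CommRing F] [CommRing K]
    [Algebra F K] [Fintype ι] [DecidableEq ι] (b : Module.Basis ι F K) {α : K}
    (hα : Algebra.adjoin F {α} = ⊤) {D : Matrix ι ι F}
    (hD : Commute D (leftMulMatrix b α)) : ∃ z, D = leftMulMatrix b z := by
  set e := LinearMap.toMatrixAlgEquiv b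
  have hf : Commute (e.symm D) (lmul F K α) := by
    have hα' : leftMulMatrix b α = e (lmul F K α) := rfl
    simpa only [hα', e.symm_apply_apply] using hD.map e.symm
  refine ⟨e.symm D 1, ?_⟩
  rw [leftMulMatrix_apply, ← Module.End.eq_lmul_of_commute_lmul hα hf]
  exact (e.apply_symm_apply D).symm

theorem Matrix.trace_commutator_mul_eq_zero_of_commute {R ι : Type*} [CommRing R] [Fintype ι]
    {T C E : Matrix ι ι R} (hE : Commute E C) : trace ((T * C - C * T) * E) = 0 := by
  rw [sub_mul, trace_sub, mul_assoc, ← hE.eq, ← mul_assoc, mul_assoc C, trace_mul_comm C, sub_self]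

theorem Algebra.commute_leftMulMatrix_of_commute_commutator {F K ι : Type*} [Field F] [Field K]
    [Algebra F K] [Algebra.IsSeparable F K] [Fintype ι] [DecidableEq ι] (b : Module.Basis ι F K)
    {α : K} (hα : Algebra.adjoin F {α} = ⊤) {T : Matrix ι ι F}
    (h : Commute (T * leftMulMatrix b α - leftMulMatrix b α * T) (leftMulMatrix b α)) :
    Commute T (leftMulMatrix b α) := by
  have : FiniteDimensional F K := .of_basis b
  obtain ⟨z, hz⟩ := exists_eq_leftMulMatrix_of_commute b hα h
  have hz0 : z = 0 := (traceForm_nondegenerate F K).1 z fun w => by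
    rw [traceForm_apply, trace_eq_matrix_trace b, map_mul, ← hz]
    exact trace_commutator_mul_eq_zero_of_commute ((Commute.all w α).map (leftMulMatrix b))
  rwa [hz0, map_zero, sub_eq_zero] at hz

theorem Algebra.isSeparable_of_adjoin_eq_top {F K : Type*} [Field F] [Field K] [Algebra F K]
    {α : K} (hα : Algebra.adjoin F {α} = ⊤) (hsep : IsSeparable F α) :
    Algebra.IsSeparable F K := by
  rw [← separableClosure.eq_top_iff, _root_.eq_top_iff,
    ← IntermediateField.adjoin_eq_top_of_algebra F _ hα, IntermediateField.adjoin_le_iff,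
    Set.singleton_subset_iff]
  exact mem_separableClosure_iff.2 hsep

theorem companionMat_eq_leftMulMatrix_root {F : Type*} [Field F] {p : F[X]} (hp : p.Monic) :
    companionMat F p.natDegree p =
      Algebra.leftMulMatrix (AdjoinRoot.powerBasis' hp).basis (AdjoinRoot.root p) := by
  rw [← AdjoinRoot.powerBasis'_gen hp, PowerBasis.leftMulMatrix, PowerBasis.minpolyGen_eq,
    AdjoinRoot.powerBasis'_gen, AdjoinRoot.minpoly_root hp.ne_zero, hp.leadingCoeff, inv_one,
    C_1, mul_one]
  ext i j
  have : (j : ℕ) = p.natDegree - 1 ↔ (j : ℕ) + 1 = p.natDegree := by omega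
  simp only [companionMat, Matrix.of_apply, AdjoinRoot.powerBasis'_dim, this]
  rfl

/-- for `p` monic irreducible separable with companion matrix `C`,
`X, Y ∈ Z(C)` and `T` arbitrary, `X + CT = TC + Y` iff `X = Y` and `T ∈ Z(C)`. -/
theorem key_matrix_equation_separable
    {F : Type*} [Field F] {n : ℕ}
    (p : Polynomial F) (hmonic : p.Monic) (hirr : Irreducible p)
    (hsep : p.Separable) (hdeg : p.natDegree = n)
    (X Y T : Matrix (Fin n) (Fin n) F)
    (hX : X * companionMat F n p = companionMat F n p * X)
    (hY : Y * companionMat F n p = companionMat F n p * Y) :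
    X + companionMat F n p * T = T * companionMat F n p + Y ↔
      (X = Y ∧ T * companionMat F n p = companionMat F n p * T) := by
  subst hdeg
  have : Fact (Irreducible p) := ⟨hirr⟩
  have hgen := AdjoinRoot.adjoinRoot_eq_top (f := p)
  have : Algebra.IsSeparable F (AdjoinRoot p) := Algebra.isSeparable_of_adjoin_eq_top hgen <|
    hsep.of_dvd <| minpoly.dvd F _ ((AdjoinRoot.aeval_eq p).trans AdjoinRoot.mk_self)
  rw [companionMat_eq_leftMulMatrix_root hmonic] at hX hY ⊢
  set C : Matrix (Fin p.natDegree) (Fin p.natDegree) F :=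
    Algebra.leftMulMatrix (AdjoinRoot.powerBasis' hmonic).basis (AdjoinRoot.root p)
  constructor
  · intro h
    have hXY : X - Y = T * C - C * T := sub_eq_sub_iff_add_eq_add.2 h
    have hT : Commute T C := Algebra.commute_leftMulMatrix_of_commute_commutator _ hgen <|
      hXY ▸ Commute.sub_left hX hY
    exact ⟨sub_eq_zero.1 (hXY.trans (sub_eq_zero.2 hT.eq)), hT.eq⟩
  · rintro ⟨rfl, hT⟩
    rw [hT, add_comm]
end

section
/- Let F be a field, p a monic irreducible and separable polynomial of degree s over F, let α_1 ≥ α_2 ≥ … ≥ α_m ≥ 1 be integers, and let G = diag(G_1,…,G_m) where G_i is the generalized Jordan block of the first kind of size α_i associated with p. Suppose X is a square matrix over F commuting with G, and partition X into blocks X_{i,j} of size sα_i × sα_j for i,j = 1,…,m conformally with the block structure of G. Then for all i,j: (1) if α_i = α_j then X_{i,j} commutes with G_i; (2) if α_i < α_j then the last s(α_j - α_i) columns of X_{i,j} are zero and the left sα_i × sα_i submatrix of X_{i,j} commutes with G_i; (3) if α_i > α_j then the first s(α_i - α_j) rows of X_{i,j} are zero and the bottom sα_j × sα_j submatrix of X_{i,j}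 commutes with G_j. -/
/-!
Write `C` for the companion matrix of `p` and `Y a b` for the `s × s` blocks of `X_{ij}`. Blockwise,
`X_{ij} G_j = G_i X_{ij}` says `C Y a b - Y a b C = Y a (b+1) - Y (a-1) b`. Since `p` is irreducible
and separable, `F[C] ≅ F[X]/(p)` is a separable field extension, so its trace form is nondegenerate.
The centralizer of `C` is `F[C]` and every commutator `[C, W]` is trace-orthogonal to it, hence
`[C, [C, W]] = 0` forces `[C, W] = 0`. Along a row whose predecessor vanishes, each block is `ad C`
of the previous one and the row eventually becomes zero, so it already vanishes after its first
block. Induction over the rows (and, after reflecting through the anti-diagonal, over the columns)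
gives the zero pattern; what is left of the block equations is the commutation of the square parts
with the smaller Jordan block.
-/

open Matrix Polynomial

/-- The generalized Jordan block of the first kind of size `ℓ` associated with `p`
(degree `s`): the `sℓ × sℓ` block matrix with `ℓ` diagonal `s×s` blocks equal to the
companion matrix `C` of `p`, identity `s×s` blocks directly below the diagonal, and
zeros elsewhere. Rows/columns indexed by `Fin ℓ × Fin s`. -/
def genJordanBlockOne (F : Type*) [Field F] (s ℓ : ℕ) (p : Polynomial F) :
    Matrix (Fin ℓ × Fin s) (Fin ℓ × Fin s) F :=
  Matrix.of fun x y =>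
    if x.1 = y.1 then companionMat F s p x.2 y.2
    else if (x.1 : ℕ) = (y.1 : ℕ) + 1 then (1 : Matrix (Fin s) (Fin s) F) x.2 y.2
    else 0


/-- The generalized Jordan form of the first kind `diag(G_1, …, G_m)` where `G_i` is
the generalized Jordan block of the first kind of size `α i` associated with `p`.
Rows/columns are indexed by `Σ i : Fin m, Fin (α i) × Fin s`. -/
def genJordanFormOne (F : Type*) [Field F] (s m : ℕ) (α : Fin m → ℕ)
    (p : Polynomial F) :
    Matrix (Σ i : Fin m, Fin (α i) × Fin s) (Σ i : Fin m, Fin (α i) × Fin s) F :=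
  Matrix.of fun x y =>
    if x.1 = y.1 then
      (if (x.2.1 : ℕ) = (y.2.1 : ℕ) then companionMat F s p x.2.2 y.2.2
       else if (x.2.1 : ℕ) = (y.2.1 : ℕ) + 1 then
         (1 : Matrix (Fin s) (Fin s) F) x.2.2 y.2.2
       else 0)
    else 0

open Algebra in
theorem eq_lmul_apply_one_of_commute {F K : Type*} [Field F] [CommRing K] [Algebra F K] {a : K}
    (ha : adjoin F {a} = ⊤) {z : Module.End F K} (hz : Commute z (lmul F K a)) :
    z = lmul F K (z 1) := by
  have hcomm (x : K) : Commute z (lmul F K x) := by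
    refine commute_of_mem_adjoin_singleton_of_commute (R := F) ?_ hz
    rw [← AlgHom.map_adjoin_singleton, ha]
    exact ⟨x, trivial, rfl⟩
  ext x
  simpa [mul_comm] using LinearMap.congr_fun (hcomm x) 1

open Algebra in
theorem commute_lmul_of_commute_commutator {F K : Type*} [Field F] [Field K] [Algebra F K]
    [FiniteDimensional F K] [Algebra.IsSeparable F K] {a : K} (ha : adjoin F {a} = ⊤)
    {w : Module.End F K} (h : Commute (lmul F K a) (lmul F K a * w - w * lmul F K a)) :
    Commute (lmul F K a) w := by
  set z := lmul F K a * w - w * lmul F K a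
  have hz : z = lmul F K (z 1) := eq_lmul_apply_one_of_commute ha h.symm
  -- `lmul y` commutes with `lmul a`, so `lmul y * z` is again a commutator and has trace zero
  have htrace (y : K) : traceForm F K y (z 1) = 0 := by
    have : lmul F K y * z = lmul F K a * (lmul F K y * w) - lmul F K y * w * lmul F K a := by
      simp only [z, mul_sub, ← mul_assoc, ← map_mul, mul_comm y a]
    rw [traceForm_apply, trace_apply, map_mul, ← hz, this, map_sub, LinearMap.trace_mul_comm,
      sub_self]
  have hz1 : z 1 = 0 := (traceForm_nondegenerate F K).2 _ htrace
  exact sub_eq_zero.mp (show z = 0 by rw [hz, hz1, map_zero])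

open AdjoinRoot in
theorem AdjoinRoot.algebra_isSeparable {F : Type*} [Field F] {p : F[X]} [Fact (Irreducible p)]
    (hsep : p.Separable) : Algebra.IsSeparable F (AdjoinRoot p) := by
  have hroot : IsSeparable F (root p) :=
    hsep.of_dvd (minpoly.dvd F _ (by rw [aeval_eq, mk_self]))
  have := (IntermediateField.isSeparable_adjoin_simple_iff_isSeparable F _).2 hroot
  rw [IntermediateField.adjoin_root_eq_top] at this
  exact Algebra.IsSeparable.of_algHom F _ IntermediateField.topEquiv.symm.toAlgHom

theorem companionMat_eq_leftMulMatrix {F : Type*} [Field F] {p : F[X]} (hp : p.Monic) :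
    companionMat F p.natDegree p =
      Algebra.leftMulMatrix (AdjoinRoot.powerBasis hp.ne_zero).basis (AdjoinRoot.root p) := by
  have := (AdjoinRoot.powerBasis hp.ne_zero).leftMulMatrix
  rw [PowerBasis.minpolyGen_eq, AdjoinRoot.minpoly_powerBasis_gen_of_monic hp] at this
  rw [← AdjoinRoot.powerBasis_gen hp.ne_zero, this]
  ext i j
  simp only [companionMat, Matrix.of_apply, AdjoinRoot.powerBasis_dim]
  congr 1
  simp only [eq_iff_iff]
  omega

theorem commute_companionMat_of_commute_commutator {F : Type*} [Field F] {p : F[X]}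
    (hmonic : p.Monic) (hirr : Irreducible p) (hsep : p.Separable)
    {W : Matrix (Fin p.natDegree) (Fin p.natDegree) F}
    (h : Commute (companionMat F p.natDegree p)
      (companionMat F p.natDegree p * W - W * companionMat F p.natDegree p)) :
    Commute (companionMat F p.natDegree p) W := by
  have : Fact (Irreducible p) := ⟨hirr⟩
  have := AdjoinRoot.algebra_isSeparable hsep
  let pb := AdjoinRoot.powerBasis hmonic.ne_zero
  have := pb.finite
  let e : Module.End F (AdjoinRoot p) ≃ₐ[F] Matrix (Fin p.natDegree) (Fin p.natDegree) F :=
    LinearMap.toMatrixAlgEquiv pb.basis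
  have hC : companionMat F p.natDegree p = e (Algebra.lmul F _ (AdjoinRoot.root p)) :=
    companionMat_eq_leftMulMatrix hmonic
  obtain ⟨w, rfl⟩ := e.surjective W
  rw [hC, ← map_mul, ← map_mul, ← map_sub, commute_map_iff e.injective] at h
  rw [hC, commute_map_iff e.injective]
  exact commute_lmul_of_commute_commutator AdjoinRoot.adjoinRoot_eq_top h

section IsBlockIntertwiner

variable {M : Type*} [AddCommGroup M] {D : M →+ M}

theorem eq_zero_of_forall_succ_eq_apply (hD : ∀ w, D (D w) = 0 → D w = 0) {f : ℤ → M}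
    {k₀ N : ℤ} (hf : ∀ k, k₀ ≤ k → f (k + 1) = D (f k)) (hN : ∀ k, N ≤ k → f k = 0) :
    ∀ k, k₀ < k → f k = 0 := by
  have hDf : ∀ k, k ≤ N → k₀ ≤ k → D (f k) = 0 := by
    intro k hk
    induction k, hk using Int.leInductionDown with
    | base => intro _; rw [hN N le_rfl, map_zero]
    | pred k _ ih =>
      intro hk₀
      exact hD _ (by rw [← hf _ hk₀, sub_add_cancel]; exact ih (by omega))
  intro k hk
  rw [← sub_add_cancel k 1, hf _ (by omega)]
  rcases le_total (k - 1) N with h | h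
  · exact hDf _ h (by omega)
  · rw [hN _ h, map_zero]

/-- With `Y a b` the `s × s` blocks of an `r × c` block matrix `Z` (zero outside the block range)
and `D = ad C`, these are the blockwise equations of `Z * J_c = J_r * Z` for the generalized
Jordan blocks `J` built from `C`. -/
structure IsBlockIntertwiner (D : M →+ M) (r c : ℤ) (Y : ℤ → ℤ → M) : Prop where
  eq_zero_outside : ∀ a b, ¬(0 ≤ a ∧ a < r ∧ 0 ≤ b ∧ b < c) → Y a b = 0
  map_eq : ∀ a b, 0 ≤ a → a < r → 0 ≤ b → b < c → D (Y a b) = Y a (b + 1) - Y (a - 1) b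

namespace IsBlockIntertwiner

variable {r c : ℤ} {Y : ℤ → ℤ → M}

theorem eq_zero_of_lt (hY : IsBlockIntertwiner D r c Y) (hD : ∀ w, D (D w) = 0 → D w = 0)
    {a b : ℤ} (hab : a < b) : Y a b = 0 := by
  rcases lt_or_ge a (-1) with ha | ha
  · exact hY.eq_zero_outside a b (by omega)
  induction a, ha using Int.leInduction generalizing b with
  | base => exact hY.eq_zero_outside _ _ (by omega)
  | succ a ha ih =>
    -- row `a` vanishes right of the diagonal, so along row `a + 1` each block is `D` of the previous
    refine eq_zero_of_forall_succ_eq_apply hD (f := Y (a + 1)) (k₀ := a + 1) (N := c)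
      (fun k hk => ?_) (fun k hk => hY.eq_zero_outside _ _ (by omega)) b hab
    by_cases hbox : a + 1 < r ∧ k < c
    · rw [hY.map_eq _ _ (by omega) hbox.1 (by omega) hbox.2, add_sub_cancel_right,
        ih (by omega), sub_zero]
    · rw [hY.eq_zero_outside _ _ (by omega), hY.eq_zero_outside (a + 1) k (by omega),
        map_zero]

theorem reflect (hY : IsBlockIntertwiner D r c Y) :
    IsBlockIntertwiner (-D) c r (fun a b => Y (r - 1 - b) (c - 1 - a)) where
  eq_zero_outside a b h := hY.eq_zero_outside _ _ (by omega)
  map_eq a b ha hac hb hbr := by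
    have := hY.map_eq (r - 1 - b) (c - 1 - a) (by omega) (by omega) (by omega) (by omega)
    rw [AddMonoidHom.neg_apply, this, neg_sub]
    congr 2 <;> ring

theorem eq_zero_of_add_lt (hY : IsBlockIntertwiner D r c Y) (hD : ∀ w, D (D w) = 0 → D w = 0)
    {a b : ℤ} (hab : a + c < b + r) : Y a b = 0 := by
  have hD' : ∀ w, (-D) ((-D) w) = 0 → (-D) w = 0 := by simpa using hD
  simpa using hY.reflect.eq_zero_of_lt hD' (a := c - 1 - b) (b := r - 1 - a) (by omega)

theorem leftSquare (hY : IsBlockIntertwiner D r c Y) (hD : ∀ w, D (D w) = 0 → D w = 0)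
    (hrc : r ≤ c) : IsBlockIntertwiner D r r Y where
  eq_zero_outside a b h := by
    by_cases hab : a < b
    · exact hY.eq_zero_of_lt hD hab
    · exact hY.eq_zero_outside a b (by omega)
  map_eq a b ha har hb hbr := hY.map_eq a b ha har hb (by omega)

theorem bottomSquare (hY : IsBlockIntertwiner D r c Y) (hD : ∀ w, D (D w) = 0 → D w = 0)
    (hcr : c ≤ r) : IsBlockIntertwiner D c c (fun a b => Y (a + (r - c)) b) where
  eq_zero_outside a b h := by
    by_cases hab : a + (r - c) + c < b + r
    · exact hY.eq_zero_of_add_lt hD hab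
    · exact hY.eq_zero_outside _ b (by omega)
  map_eq a b ha hac hb hbc := by
    rw [hY.map_eq _ b (by omega) (by omega) hb hbc, sub_add_eq_add_sub]

end IsBlockIntertwiner

end IsBlockIntertwiner

theorem Fin.sum_ite_coe_eq {R : Type*} [AddCommMonoid R] {c : ℕ} (g : ℤ → R) (t : ℤ)
    (hg : ¬(0 ≤ t ∧ t < c) → g t = 0) : ∑ b : Fin c, (if (b : ℤ) = t then g b else 0) = g t := by
  by_cases ht : 0 ≤ t ∧ t < c
  · lift t to ℕ using ht.1
    rw [Finset.sum_eq_single ⟨t, by omega⟩ (fun b _ hb => if_neg (by simpa [Fin.ext_iff] using hb))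
      (by simp)]
    simp
  · rw [hg ht]
    exact Finset.sum_eq_zero fun b _ => if_neg (by have := b.isLt; omega)

namespace Matrix

variable {ι : Type*} [Fintype ι] [DecidableEq ι] {m' n' : ι → Type*}
  {R l : Type*} [NonUnitalNonAssocSemiring R]

theorem submatrix_mul_blockDiagonal'_sigmaMk [∀ i, Fintype (m' i)] (X : Matrix l (Σ i, m' i) R)
    (M : ∀ i, Matrix (m' i) (n' i) R) {k : Type*} (f : k → l) (j : ι) :
    (X * blockDiagonal' M).submatrix f (Sigma.mk j) = X.submatrix f (Sigma.mk j) * M j := by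
  ext x y
  simp [mul_apply, blockDiagonal'_apply, Fintype.sum_sigma]

theorem submatrix_blockDiagonal'_mul_sigmaMk [∀ i, Fintype (n' i)] (X : Matrix (Σ i, n' i) l R)
    (M : ∀ i, Matrix (m' i) (n' i) R) (i : ι) {k : Type*} (f : k → l) :
    (blockDiagonal' M * X).submatrix (Sigma.mk i) f = M i * X.submatrix (Sigma.mk i) f := by
  ext x y
  simp [mul_apply, blockDiagonal'_apply, Fintype.sum_sigma]

end Matrix

def commutatorHom {A : Type*} [Ring A] (C : A) : A →+ A :=
  AddMonoidHom.mulLeft C - AddMonoidHom.mulRight C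

theorem commutatorHom_apply {A : Type*} [Ring A] (C w : A) : commutatorHom C w = C * w - w * C :=
  rfl

section GenJordan

variable {F : Type*} [Field F] {s : ℕ} {p : F[X]}

theorem genJordanFormOne_eq_blockDiagonal' {m : ℕ} (α : Fin m → ℕ) :
    genJordanFormOne F s m α p = blockDiagonal' fun i => genJordanBlockOne F s (α i) p := by
  ext ⟨i, a, u⟩ ⟨j, b, v⟩
  by_cases h : i = j
  · subst h
    simp [genJordanFormOne, genJordanBlockOne, blockDiagonal'_apply, Fin.ext_iff]
  · simp [genJordanFormOne, blockDiagonal'_apply, h]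

theorem submatrix_sigmaMk_mul_genJordanBlockOne {m : ℕ} {α : Fin m → ℕ}
    {X : Matrix (Σ i : Fin m, Fin (α i) × Fin s) (Σ i : Fin m, Fin (α i) × Fin s) F}
    (hX : X * genJordanFormOne F s m α p = genJordanFormOne F s m α p * X) (i j : Fin m) :
    X.submatrix (Sigma.mk i) (Sigma.mk j) * genJordanBlockOne F s (α j) p =
      genJordanBlockOne F s (α i) p * X.submatrix (Sigma.mk i) (Sigma.mk j) := by
  have := congrArg (·.submatrix (Sigma.mk i) (Sigma.mk j)) hX
  simp only [genJordanFormOne_eq_blockDiagonal'] at this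
  rwa [submatrix_mul_blockDiagonal'_sigmaMk, submatrix_blockDiagonal'_mul_sigmaMk] at this

theorem genJordanBlockOne_apply {ℓ : ℕ} (x y : Fin ℓ × Fin s) :
    genJordanBlockOne F s ℓ p x y =
      (if x.1 = y.1 then companionMat F s p x.2 y.2 else 0) +
        if (x.1 : ℤ) = y.1 + 1 then (1 : Matrix (Fin s) (Fin s) F) x.2 y.2 else 0 := by
  simp only [genJordanBlockOne, of_apply, Fin.ext_iff]
  split_ifs <;> simp <;> omega

def blockAt {r c : ℕ} (Z : Matrix (Fin r × Fin s) (Fin c × Fin s) F) (a b : ℤ) :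
    Matrix (Fin s) (Fin s) F :=
  of fun u v =>
    if h : (0 ≤ a ∧ a < r) ∧ (0 ≤ b ∧ b < c) then
      Z (⟨a.toNat, by omega⟩, u) (⟨b.toNat, by omega⟩, v)
    else 0

variable {r c : ℕ}

theorem blockAt_apply (Z : Matrix (Fin r × Fin s) (Fin c × Fin s) F) {a b : ℤ} (a' : Fin r)
    (b' : Fin c) (ha : (a' : ℤ) = a) (hb : (b' : ℤ) = b) (u v : Fin s) :
    blockAt Z a b u v = Z (a', u) (b', v) := by
  subst ha hb
  simp [blockAt]

theorem blockAt_eq_zero (Z : Matrix (Fin r × Fin s) (Fin c × Fin s) F) {a b : ℤ}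
    (h : ¬(0 ≤ a ∧ a < r ∧ 0 ≤ b ∧ b < c)) : blockAt Z a b = 0 := by
  ext u v
  simp only [blockAt, of_apply, Matrix.zero_apply]
  rw [dif_neg (by tauto)]

theorem mul_genJordanBlockOne_apply {Z : Matrix (Fin r × Fin s) (Fin c × Fin s) F}
    {Y : ℤ → ℤ → Matrix (Fin s) (Fin s) F} (hZY : ∀ a b u v, Z (a, u) (b, v) = Y a b u v)
    (hY : ∀ a b : ℤ, ¬(0 ≤ a ∧ a < r ∧ 0 ≤ b ∧ b < c) → Y a b = 0) (a : Fin r) (u : Fin s)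
    (b : Fin c) (v : Fin s) :
    (Z * genJordanBlockOne F s c p) (a, u) (b, v) =
      (Y a b * companionMat F s p + Y a (b + 1)) u v := by
  simp only [mul_apply, Fintype.sum_prod_type, genJordanBlockOne_apply, mul_add,
    Finset.sum_add_distrib, mul_ite, mul_zero, one_apply, mul_one, Finset.sum_ite_eq',
    Finset.sum_ite_irrel, Finset.sum_const_zero, Finset.mem_univ, if_true, hZY, Matrix.add_apply]
  rw [Fin.sum_ite_coe_eq (fun b' => Y a b' u v) _ (fun h => by rw [hY _ _ (by omega)]; rfl)]

theorem genJordanBlockOne_mul_apply {Z : Matrix (Fin r × Fin s) (Fin c × Fin s) F}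
    {Y : ℤ → ℤ → Matrix (Fin s) (Fin s) F} (hZY : ∀ a b u v, Z (a, u) (b, v) = Y a b u v)
    (hY : ∀ a b : ℤ, ¬(0 ≤ a ∧ a < r ∧ 0 ≤ b ∧ b < c) → Y a b = 0) (a : Fin r) (u : Fin s)
    (b : Fin c) (v : Fin s) :
    (genJordanBlockOne F s r p * Z) (a, u) (b, v) =
      (companionMat F s p * Y a b + Y (a - 1) b) u v := by
  simp only [mul_apply, Fintype.sum_prod_type, genJordanBlockOne_apply, add_mul,
    Finset.sum_add_distrib, ite_mul, zero_mul, one_apply, one_mul, Finset.sum_ite_eq,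
    Finset.sum_ite_irrel, Finset.sum_const_zero, Finset.mem_univ, if_true, hZY, Matrix.add_apply]
  congr 1
  simp only [eq_comm (a := ((a : ℕ) : ℤ)), ← eq_sub_iff_add_eq]
  exact Fin.sum_ite_coe_eq (fun a' => Y a' b u v) _ (fun h => by rw [hY _ _ (by omega)]; rfl)

theorem mul_genJordanBlockOne_eq_of_isBlockIntertwiner
    {Z : Matrix (Fin r × Fin s) (Fin c × Fin s) F} {Y : ℤ → ℤ → Matrix (Fin s) (Fin s) F}
    (hY : IsBlockIntertwiner (commutatorHom (companionMat F s p)) r c Y)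
    (hZY : ∀ a b u v, Z (a, u) (b, v) = Y a b u v) :
    Z * genJordanBlockOne F s c p = genJordanBlockOne F s r p * Z := by
  ext ⟨a, u⟩ ⟨b, v⟩
  rw [mul_genJordanBlockOne_apply hZY hY.eq_zero_outside,
    genJordanBlockOne_mul_apply hZY hY.eq_zero_outside]
  have := hY.map_eq a b (by omega) (by simp) (by omega) (by simp)
  rw [commutatorHom_apply, sub_eq_sub_iff_add_eq_add] at this
  rw [add_comm, ← this]

theorem isBlockIntertwiner_blockAt {Z : Matrix (Fin r × Fin s) (Fin c × Fin s) F}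
    (hZ : Z * genJordanBlockOne F s c p = genJordanBlockOne F s r p * Z) :
    IsBlockIntertwiner (commutatorHom (companionMat F s p)) r c (blockAt Z) where
  eq_zero_outside _ _ := blockAt_eq_zero Z
  map_eq a b ha har hb hbc := by
    lift a to ℕ using ha
    lift b to ℕ using hb
    have hZY (a : Fin r) (b : Fin c) (u v : Fin s) : Z (a, u) (b, v) = blockAt Z a b u v :=
      (blockAt_apply Z a b rfl rfl u v).symm
    have hY (a b : ℤ) := blockAt_eq_zero Z (a := a) (b := b)
    have ha : a < r := by omega
    have hb : b < c := by omega
    have key : blockAt Z a b * companionMat F s p + blockAt Z a (b + 1) =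
        companionMat F s p * blockAt Z a b + blockAt Z (a - 1) b := by
      ext u v
      calc _ = (Z * genJordanBlockOne F s c p) (⟨a, ha⟩, u) (⟨b, hb⟩, v) :=
            (mul_genJordanBlockOne_apply hZY hY _ u _ v).symm
        _ = (genJordanBlockOne F s r p * Z) (⟨a, ha⟩, u) (⟨b, hb⟩, v) := by rw [hZ]
        _ = _ := genJordanBlockOne_mul_apply hZY hY _ u _ v
    rw [commutatorHom_apply, sub_eq_sub_iff_add_eq_add, ← key, add_comm]

end GenJordan

/-- if `X` commutes with the generalized Jordan form of the first kind
`G = diag(G_1,…,G_m)` with Segre characteristic `α_1 ≥ … ≥ α_m ≥ 1` (`p` monic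
irreducible separable of degree `s`), then each block `X_{i,j}` satisfies: if
`α_i = α_j` it commutes with `G_i`; if `α_i < α_j` its last `s(α_j-α_i)` columns
vanish and its left square submatrix commutes with `G_i`; if `α_i > α_j` its first
`s(α_i-α_j)` rows vanish and its bottom square submatrix commutes with `G_j`. -/
theorem centralizer_genJordanFormOne
    {F : Type*} [Field F] {s m : ℕ}
    (α : Fin m → ℕ)
    (p : Polynomial F) (hmonic : p.Monic) (hirr : Irreducible p)
    (hsep : p.Separable) (hdeg : p.natDegree = s)
    (X : Matrix (Σ i : Fin m, Fin (α i) × Fin s) (Σ i : Fin m, Fin (α i) × Fin s) F)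
    (hX : X * genJordanFormOne F s m α p = genJordanFormOne F s m α p * X) :
    ∀ i j : Fin m,
      (∀ h : α i = α j,
        (Matrix.of fun x y : Fin (α i) × Fin s =>
            X ⟨i, x⟩ ⟨j, (Fin.cast h y.1, y.2)⟩) * genJordanBlockOne F s (α i) p =
          genJordanBlockOne F s (α i) p *
            (Matrix.of fun x y : Fin (α i) × Fin s =>
              X ⟨i, x⟩ ⟨j, (Fin.cast h y.1, y.2)⟩)) ∧
      (∀ _hlt : α i < α j,
        ((∀ (x : Fin (α i) × Fin s) (y : Fin (α j) × Fin s),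
            α i ≤ (y.1 : ℕ) → X ⟨i, x⟩ ⟨j, y⟩ = 0) ∧
          (Matrix.of fun x y : Fin (α i) × Fin s =>
              X ⟨i, x⟩ ⟨j, (⟨(y.1 : ℕ), by have := y.1.isLt; omega⟩, y.2)⟩) *
              genJordanBlockOne F s (α i) p =
            genJordanBlockOne F s (α i) p *
              (Matrix.of fun x y : Fin (α i) × Fin s =>
                X ⟨i, x⟩ ⟨j, (⟨(y.1 : ℕ), by have := y.1.isLt; omega⟩, y.2)⟩))) ∧
      (∀ _hgt : α j < α i,
        ((∀ (x : Fin (α i) × Fin s) (y : Fin (α j) × Fin s),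
            (x.1 : ℕ) < α i - α j → X ⟨i, x⟩ ⟨j, y⟩ = 0) ∧
          (Matrix.of fun x y : Fin (α j) × Fin s =>
              X ⟨i, (⟨α i - α j + (x.1 : ℕ), by have := x.1.isLt; omega⟩, x.2)⟩ ⟨j, y⟩) *
              genJordanBlockOne F s (α j) p =
            genJordanBlockOne F s (α j) p *
              (Matrix.of fun x y : Fin (α j) × Fin s =>
                X ⟨i, (⟨α i - α j + (x.1 : ℕ), by have := x.1.isLt; omega⟩, x.2)⟩
                  ⟨j, y⟩))) := by
  subst hdeg
  intro i j
  set C := companionMat F p.natDegree p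
  have hD (w) (h : commutatorHom C (commutatorHom C w) = 0) : commutatorHom C w = 0 :=
    sub_eq_zero.mpr (commute_companionMat_of_commute_commutator hmonic hirr hsep (sub_eq_zero.mp h))
  set Xij := X.submatrix (Sigma.mk i) (Sigma.mk j)
  have hY := isBlockIntertwiner_blockAt (submatrix_sigmaMk_mul_genJordanBlockOne hX i j)
  refine ⟨fun h => ?_, fun hlt => ⟨fun ⟨a, u⟩ ⟨b, v⟩ hb => ?_, ?_⟩,
    fun hgt => ⟨fun ⟨a, u⟩ ⟨b, v⟩ ha => ?_, ?_⟩⟩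
  · have hc : ((α j : ℕ) : ℤ) = α i := by rw [h]
    refine mul_genJordanBlockOne_eq_of_isBlockIntertwiner (hc ▸ hY) fun a b u v => ?_
    exact (blockAt_apply Xij a (Fin.cast h b) rfl rfl u v).symm
  · dsimp only at hb
    show Xij (a, u) (b, v) = 0
    rw [← blockAt_apply Xij a b rfl rfl, hY.eq_zero_of_lt hD (by omega), Matrix.zero_apply]
  · refine mul_genJordanBlockOne_eq_of_isBlockIntertwiner (hY.leftSquare hD (by omega))
      fun a b u v => ?_
    exact (blockAt_apply Xij a _ rfl rfl u v).symm
  · dsimp only at ha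
    show Xij (a, u) (b, v) = 0
    rw [← blockAt_apply Xij a b rfl rfl, hY.eq_zero_of_add_lt hD (by omega), Matrix.zero_apply]
  · refine mul_genJordanBlockOne_eq_of_isBlockIntertwiner (hY.bottomSquare hD (by omega))
      fun a b u v => ?_
    exact (blockAt_apply Xij _ b (by push_cast; omega) rfl u v).symm
end
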